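/- arXiv:1911.07458 — 5 statements merged into one kernel-verified Lean document; each statement's English description precedes it below -/
import Mathlib

section
/- Let f(X) = ∑_{k≥1} (f_k/k!) X^k and g(X) = ∑_{k≥1} (g_k/k!) X^k be formal power series over a commutative ring with zero constant term. Then the n-th coefficient (with n ≥ 1) of the composition f ∘ g satisfies (f∘g)_n = ∑_{π ∈ P_n} f_{|π|} · ∏_{Γ ∈ π} g_{|Γ|}, where P_n is the set of set partitions of {1,…,n}. -/
open scoped Classical

/-- Composition of formal power series: `(pcomp F G)` is `∑ₖ (coeff k F) • G^k`, which is a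
well-defined power series when `G` has zero constant term, since then the coefficient of `Xⁿ`
only receives contributions from `k ≤ n`. -/
noncomputable def pcomp {K : Type*} [CommRing K] (F G : PowerSeries K) : PowerSeries K :=
  PowerSeries.mk fun n =>
    ∑ k ∈ Finset.range (n + 1), PowerSeries.coeff k F * PowerSeries.coeff n (G ^ k)

/-! Writing `G = ∑ gₘ Xᵐ/m!`, the coefficient `n! [Xⁿ] Gᵏ` is the sum, over all colourings
`σ : Fin n → Fin k`, of `∏ᵢ g |σ⁻¹ i|`: split off the last colour class and use that the product
of exponential series is a binomial convolution. Since `g 0 = 0`, only surjective colourings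
contribute, and these are exactly the maps `e ∘ π.part` for a partition `π` into `k` blocks and a
bijection `e` from its blocks to the colours, so each such `π` is counted `k!` times. Multiplying
by `fₖ/k!` and summing over `k` gives the formula. -/

open Finset PowerSeries
open scoped Nat

namespace FaaDiBruno

variable {R : Type*} [CommSemiring R]

noncomputable def coloringSum (g : ℕ → R) (k : ℕ) (β : Type*) [Fintype β] [DecidableEq β] :
    R :=
  ∑ σ : β → Fin k, ∏ i, g #{x | σ x = i}

theorem coloringSum_congr {β γ : Type*} [Fintype β] [DecidableEq β] [Fintype γ]
    [DecidableEq γ] (g : ℕ → R) (k : ℕ) (e : β ≃ γ) : coloringSum g k β = coloringSum g k γ := by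
  refine Fintype.sum_equiv (e.arrowCongr (.refl _)) _ _ fun σ => prod_congr rfl fun i _ => ?_
  congr 1
  exact card_equiv e (by simp [Equiv.arrowCongr_apply])

theorem coloringSum_zero (g : ℕ → R) (n : ℕ) :
    coloringSum g 0 (Fin n) = if n = 0 then 1 else 0 := by
  cases n <;> simp [coloringSum]

section ExtendByLast

variable {β : Type*} [Fintype β] [DecidableEq β] {k : ℕ} (A : Finset β)
  (σ : ↥Aᶜ → Fin k)

def extendByLast (x : β) : Fin (k + 1) :=
  if h : x ∈ A then Fin.last k else (σ ⟨x, mem_compl.2 h⟩).castSucc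

theorem extendByLast_eq_last_iff {x : β} : extendByLast A σ x = Fin.last k ↔ x ∈ A := by
  by_cases h : x ∈ A <;> simp [extendByLast, h, Fin.castSucc_ne_last]

theorem extendByLast_coe (x : ↥Aᶜ) : extendByLast A σ x = (σ x).castSucc := by
  simp [extendByLast, (mem_compl.1 x.2)]

theorem filter_extendByLast_eq_last :
    ({x | extendByLast A σ x = Fin.last k} : Finset β) = A := by
  ext x
  simp [extendByLast_eq_last_iff]

theorem card_filter_extendByLast_eq_castSucc (i : Fin k) :
    #{x | extendByLast A σ x = i.castSucc} = #{x | σ x = i} := by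
  rw [← card_map (Function.Embedding.subtype _)]
  congr 1
  ext x
  simp only [mem_map, mem_filter, mem_univ, true_and, Function.Embedding.coe_subtype]
  by_cases h : x ∈ A
  · simp [extendByLast, h, (Fin.castSucc_ne_last i).symm]
  · simp [extendByLast, h]

theorem extendByLast_injective : Function.Injective (extendByLast (k := k) A) := by
  intro σ σ' h
  funext x
  exact Fin.castSucc_injective _ (by simpa [extendByLast_coe] using congrFun h x)

theorem filter_eq_image_extendByLast :
    ({τ | ({x | τ x = Fin.last k} : Finset β) = A} : Finset (β → Fin (k + 1))) =
      univ.image (extendByLast A) := by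
  ext τ
  simp only [mem_filter, mem_univ, true_and, mem_image]
  constructor
  · rintro rfl
    refine ⟨fun x => (τ x).castPred fun h => (mem_compl.1 x.2) (by simpa using h),
      funext fun x => ?_⟩
    by_cases h : τ x = Fin.last k <;> simp [extendByLast, h]
  · rintro ⟨σ, rfl⟩
    exact filter_extendByLast_eq_last A σ

end ExtendByLast

theorem coloringSum_succ (g : ℕ → R) (k : ℕ) (β : Type*) [Fintype β] [DecidableEq β] :
    coloringSum g (k + 1) β = ∑ A : Finset β, g #A * coloringSum g k ↥Aᶜ := by
  rw [coloringSum,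
    ← sum_fiberwise univ fun τ : β → Fin (k + 1) => ({x | τ x = Fin.last k} : Finset β)]
  refine sum_congr rfl fun A _ => ?_
  rw [filter_eq_image_extendByLast, sum_image fun σ _ σ' _ h => extendByLast_injective A h,
    coloringSum, mul_sum]
  refine sum_congr rfl fun σ _ => ?_
  simp only [Fin.prod_univ_castSucc, filter_extendByLast_eq_last,
    card_filter_extendByLast_eq_castSucc, mul_comm]

theorem coloringSum_succ_fin (g : ℕ → R) (k n : ℕ) :
    coloringSum g (k + 1) (Fin n) =
      ∑ a ∈ range (n + 1), n.choose a * (g a * coloringSum g k (Fin (n - a))) := by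
  have hcompl (A : Finset (Fin n)) : coloringSum g k ↥Aᶜ = coloringSum g k (Fin (n - #A)) :=
    coloringSum_congr g k (Fintype.equivFinOfCardEq (by simp))
  simp only [coloringSum_succ, hcompl, ← powerset_univ, sum_powerset_apply_card
    (fun a => g a * coloringSum g k (Fin (n - a))), card_fin, nsmul_eq_mul]

theorem _root_.Finpartition.parts_eq_image_part {α : Type*} [Fintype α] [DecidableEq α]
    (P : Finpartition (univ : Finset α)) : P.parts = univ.image P.part := by
  ext Γ
  refine ⟨fun h => ?_, fun h => ?_⟩
  · obtain ⟨a, -, ha⟩ := P.part_surjOn h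
    exact mem_image.2 ⟨a, mem_univ a, ha⟩
  · obtain ⟨a, -, rfl⟩ := mem_image.1 h
    exact P.part_mem.2 (mem_univ a)

theorem injOn_filter_eq {β γ : Type*} [Fintype β] [DecidableEq γ] (σ : β → γ) :
    Set.InjOn (fun i => ({x | σ x = i} : Finset β)) (univ.image σ) := by
  intro i hi j _ h
  obtain ⟨a, -, rfl⟩ := mem_image.1 hi
  have : a ∈ ({x | σ x = σ a} : Finset β) := by simp
  simpa [h] using this

section KerPartition

variable {β γ : Type*} [Fintype β] [DecidableEq β]

noncomputable def kerPartition [DecidableEq γ] (σ : β → γ) : Finpartition (univ : Finset β) :=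
  Finpartition.ofSetoid (Setoid.ker σ)

theorem kerPartition_part [DecidableEq γ] (σ : β → γ) (a : β) :
    (kerPartition σ).part a = ({x | σ x = σ a} : Finset β) := by
  ext x
  rw [kerPartition, Finpartition.mem_part_ofSetoid_iff_rel, Setoid.ker_def, eq_comm]
  simp

theorem kerPartition_parts [DecidableEq γ] (σ : β → γ) :
    (kerPartition σ).parts = (univ.image σ).image fun i => ({x | σ x = i} : Finset β) := by
  rw [Finpartition.parts_eq_image_part, image_image]
  exact image_congr fun a _ => kerPartition_part σ a

theorem prod_card_fiber_eq_ite [Fintype γ] [DecidableEq γ] {M : Type*} [CommMonoidWithZero M]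
    {g : ℕ → M} (hg : g 0 = 0) (σ : β → γ) :
    ∏ i, g #{x | σ x = i} =
      if #(kerPartition σ).parts = Fintype.card γ then ∏ Γ ∈ (kerPartition σ).parts, g #Γ
      else 0 := by
  rw [kerPartition_parts, card_image_of_injOn (injOn_filter_eq σ),
    prod_image (injOn_filter_eq σ)]
  split_ifs with h
  · rw [eq_univ_of_card _ h]
  · obtain ⟨i, hi⟩ : ∃ i, i ∉ univ.image σ := by
      by_contra! hall
      exact h (by rw [eq_univ_of_forall hall, card_univ])
    refine prod_eq_zero (mem_univ i) ?_
    rw [filter_eq_empty_iff.2 fun x _ hx => hi (mem_image.2 ⟨x, mem_univ x, hx⟩), card_empty,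
      hg]

def labelBlocks (π : Finpartition (univ : Finset β)) (e : π.parts ↪ γ) (x : β) : γ :=
  e ⟨π.part x, π.part_mem.2 (mem_univ x)⟩

theorem kerPartition_labelBlocks [DecidableEq γ] (π : Finpartition (univ : Finset β))
    (e : π.parts ↪ γ) :
    kerPartition (labelBlocks π e) = π := by
  refine Finpartition.ext ?_
  rw [π.parts_eq_image_part, (kerPartition _).parts_eq_image_part]
  refine image_congr fun a _ => ?_
  ext x
  simp [kerPartition_part, labelBlocks, π.mem_part_iff_part_eq_part (mem_univ x) (mem_univ a)]

theorem labelBlocks_injective (π : Finpartition (univ : Finset β)) :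
    Function.Injective (labelBlocks (γ := γ) π) := by
  intro e e' h
  ext ⟨Γ, hΓ⟩
  obtain ⟨a, -, rfl⟩ := π.part_surjOn hΓ
  exact congrFun h a

theorem exists_labelBlocks_eq [DecidableEq γ] {π : Finpartition (univ : Finset β)}
    {σ : β → γ} (h : kerPartition σ = π) : ∃ e, labelBlocks π e = σ := by
  have hpart (a : β) : π.part a = ({x | σ x = σ a} : Finset β) := h ▸ kerPartition_part σ a
  choose rep hrep using fun Γ : π.parts => π.nonempty_of_mem_parts Γ.2
  have hmem (Γ : π.parts) (x : β) : x ∈ Γ.1 ↔ σ x = σ (rep Γ) := by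
    rw [← π.part_eq_of_mem Γ.2 (hrep Γ), hpart]
    simp
  refine ⟨⟨fun Γ => σ (rep Γ), fun Γ Γ' h => ?_⟩, funext fun x => ?_⟩
  · exact Subtype.ext (π.eq_of_mem_parts Γ.2 Γ'.2 (hrep Γ) ((hmem Γ' _).2 h))
  · exact ((hmem _ x).1 (π.mem_part (mem_univ x))).symm

theorem filter_kerPartition_eq_map [Fintype γ] [DecidableEq γ]
    (π : Finpartition (univ : Finset β)) :
    ({σ | kerPartition σ = π} : Finset (β → γ)) =
      univ.map ⟨labelBlocks π, labelBlocks_injective π⟩ := by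
  ext σ
  simp only [mem_filter, mem_univ, true_and, mem_map, Function.Embedding.coeFn_mk]
  exact ⟨exists_labelBlocks_eq, fun ⟨e, he⟩ => he ▸ kerPartition_labelBlocks π e⟩

theorem card_filter_kerPartition_eq [Fintype γ] [DecidableEq γ]
    (π : Finpartition (univ : Finset β)) :
    #({σ | kerPartition σ = π} : Finset (β → γ)) = (Fintype.card γ).descFactorial #π.parts := by
  rw [filter_kerPartition_eq_map, card_map, card_univ, Fintype.card_embedding_eq,
    Fintype.card_coe]

end KerPartition

theorem coloringSum_eq_factorial_mul_sum_finpartition {g : ℕ → R} (hg : g 0 = 0) (k : ℕ)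
    (β : Type*) [Fintype β] [DecidableEq β] :
    coloringSum g k β =
      k ! * ∑ π : Finpartition (univ : Finset β) with #π.parts = k, ∏ Γ ∈ π.parts, g #Γ := by
  simp only [coloringSum, prod_card_fiber_eq_ite hg, Fintype.card_fin]
  rw [← sum_fiberwise univ kerPartition, mul_sum, sum_filter]
  refine sum_congr rfl fun π _ => ?_
  rw [sum_congr rfl fun σ hσ => by rw [(mem_filter.1 hσ).2], sum_const,
    card_filter_kerPartition_eq, Fintype.card_fin, nsmul_eq_mul]
  split_ifs with h
  · rw [h, Nat.descFactorial_self]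
  · rw [mul_zero]

variable [Algebra ℚ R]

noncomputable def egf (g : ℕ → R) : PowerSeries R :=
  PowerSeries.mk fun m => algebraMap ℚ R (m ! : ℚ)⁻¹ * g m

theorem inv_factorial_mul_inv_factorial {n a : ℕ} (ha : a ≤ n) :
    ((a ! : ℚ))⁻¹ * ((n - a)! : ℚ)⁻¹ = (n ! : ℚ)⁻¹ * n.choose a := by
  rw [Nat.cast_choose ℚ ha]
  field_simp

theorem coeff_egf_pow (g : ℕ → R) (k n : ℕ) :
    coeff n (egf g ^ k) = algebraMap ℚ R (n ! : ℚ)⁻¹ * coloringSum g k (Fin n) := by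
  induction k generalizing n with
  | zero =>
    rw [pow_zero, coeff_one, coloringSum_zero]
    split_ifs with h <;> simp [h]
  | succ k ih =>
    rw [pow_succ', coeff_mul, Nat.sum_antidiagonal_eq_sum_range_succ_mk, coloringSum_succ_fin,
      mul_sum]
    refine sum_congr rfl fun a ha => ?_
    rw [ih, egf, coeff_mk]
    set c := coloringSum g k (Fin (n - a))
    calc algebraMap ℚ R (a ! : ℚ)⁻¹ * g a * (algebraMap ℚ R ((n - a)! : ℚ)⁻¹ * c)
        = algebraMap ℚ R ((a ! : ℚ)⁻¹ * ((n - a)! : ℚ)⁻¹) * (g a * c) := by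
          rw [map_mul]; ring
      _ = _ := by
          rw [inv_factorial_mul_inv_factorial (Nat.lt_succ_iff.1 (mem_range.1 ha)), map_mul,
            map_natCast]
          ring

theorem algebraMap_inv_factorial_mul_factorial (k : ℕ) :
    algebraMap ℚ R (k ! : ℚ)⁻¹ * k ! = 1 := by
  rw [← map_natCast (algebraMap ℚ R), ← map_mul, inv_mul_cancel₀ (by positivity), map_one]

theorem coeff_egf_mul_coeff_egf_pow {f g : ℕ → R} (hg : g 0 = 0) (k n : ℕ) :
    coeff k (egf f) * coeff n (egf g ^ k) = algebraMap ℚ R (n ! : ℚ)⁻¹ *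
      ∑ π : Finpartition (univ : Finset (Fin n)) with #π.parts = k,
        f #π.parts * ∏ Γ ∈ π.parts, g #Γ := by
  set S := ∑ π : Finpartition (univ : Finset (Fin n)) with #π.parts = k, ∏ Γ ∈ π.parts, g #Γ
  have hfS : ∑ π : Finpartition (univ : Finset (Fin n)) with #π.parts = k,
      f #π.parts * ∏ Γ ∈ π.parts, g #Γ = f k * S := by
    rw [mul_sum]
    exact sum_congr rfl fun π hπ => by rw [(mem_filter.1 hπ).2]
  rw [hfS, coeff_egf_pow, coloringSum_eq_factorial_mul_sum_finpartition hg, egf, coeff_mk]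
  calc _ = algebraMap ℚ R (n ! : ℚ)⁻¹ * (f k * S) * (algebraMap ℚ R (k ! : ℚ)⁻¹ * k !) := by
        ring
    _ = _ := by rw [algebraMap_inv_factorial_mul_factorial, mul_one]

end FaaDiBruno

open FaaDiBruno in
theorem faa_di_bruno_powerSeries_general {K : Type*} [CommRing K] [Algebra ℚ K]
    (f g : ℕ → K) (hg : g 0 = 0) (n : ℕ) :
    PowerSeries.coeff n
        (pcomp (PowerSeries.mk fun k => algebraMap ℚ K ((k.factorial : ℚ)⁻¹) * f k)
               (PowerSeries.mk fun k => algebraMap ℚ K ((k.factorial : ℚ)⁻¹) * g k)) =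
      algebraMap ℚ K ((n.factorial : ℚ)⁻¹) *
        ∑ π : Finpartition (Finset.univ : Finset (Fin n)),
          f π.parts.card * ∏ Γ ∈ π.parts, g Γ.card := by
  have hparts (π : Finpartition (univ : Finset (Fin n))) : #π.parts ∈ range (n + 1) :=
    mem_range.2 (Nat.lt_succ_of_le (π.card_parts_le_card.trans (card_fin n).le))
  calc coeff n (pcomp (egf f) (egf g))
      = ∑ k ∈ range (n + 1), coeff k (egf f) * coeff n (egf g ^ k) := coeff_mk _ _
    _ = _ := by
      simp only [coeff_egf_mul_coeff_egf_pow hg, ← mul_sum]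
      rw [sum_fiberwise_of_maps_to fun π _ => hparts π]

/-- Faà di Bruno for formal power series in exponential normalization:
if `f(X) = ∑_{k≥1} (fₖ/k!) Xᵏ` and `g(X) = ∑_{k≥1} (gₖ/k!) Xᵏ`, then the `n`-th exponential
coefficient of `f ∘ g` is `∑_{π ∈ Pₙ} f_{|π|} ∏_{Γ ∈ π} g_{|Γ|}`. -/
theorem faa_di_bruno_powerSeries {K : Type*} [CommRing K] [Algebra ℚ K]
    (f g : ℕ → K) (hf : f 0 = 0) (hg : g 0 = 0) (n : ℕ) (hn : 1 ≤ n) :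
    PowerSeries.coeff n
        (pcomp (PowerSeries.mk fun k => algebraMap ℚ K ((k.factorial : ℚ)⁻¹) * f k)
               (PowerSeries.mk fun k => algebraMap ℚ K ((k.factorial : ℚ)⁻¹) * g k)) =
      algebraMap ℚ K ((n.factorial : ℚ)⁻¹) *
        ∑ π : Finpartition (Finset.univ : Finset (Fin n)),
          f π.parts.card * ∏ Γ ∈ π.parts, g Γ.card :=
  faa_di_bruno_powerSeries_general f g hg n
end

section
/- Let h_k (k ≥ 2) be elements of a commutative ring, let f(X) = X − ∑_{k≥2} (h_k/k!) X^k, and let g be the compositional inverse formal power series of f. Then g_0 = 0, g_1 = 1, and for k ≥ 2 one has g_k = ∑_{T ∈ S_k} E_h(T), where S_k is the set of isomorphism classes of finite rooted trees whose leaves are in bijection with {1,…,k} and in which every internal (non-leaf) vertex has at least two children, and E_h(T) = ∏_{v internal} h_{(number of children of v)}. -/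
open scoped Classical

/-- An isomorphism class of finite rooted trees whose leaves are in bijection with `{1,…,k}` and
in which every internal vertex has at least two children is canonically encoded by the laminar
family of the leaf-label sets of its subtrees.  Such a family contains the full set (the root),
all singletons (the leaves), is laminar, and does not contain `∅`; conversely any such family
arises from a unique isomorphism class of such trees (since no two vertices share the same leaf
set when all outdegrees are ≥ 2, and a partition of a set into proper subsets automatically
has ≥ 2 blocks). -/
def IsTreeFam {k : ℕ} (F : Finset (Finset (Fin k))) : Prop :=
  (∀ A ∈ F, ∀ B ∈ F, A ⊆ B ∨ B ⊆ A ∨ Disjoint A B) ∧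
    Finset.univ ∈ F ∧ (∀ i : Fin k, {i} ∈ F) ∧ ∅ ∉ F

/-- The number of children of the vertex (with leaf set) `A` in the tree encoded by `F`:
the number of maximal members of `F` strictly below `A`. -/
def childCount {k : ℕ} (F : Finset (Finset (Fin k))) (A : Finset (Fin k)) : ℕ :=
  (F.filter fun B => B ⊂ A ∧ ¬ ∃ C ∈ F, B ⊂ C ∧ C ⊂ A).card

/-- The `h`-energy `E_h(T) = ∏_{v internal} h_{#children of v}` of the tree encoded by `F`;
the internal vertices are exactly the members of `F` with more than one element. -/
noncomputable def treeEnergy {k : ℕ} {K : Type*} [CommRing K] (h : ℕ → K)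
    (F : Finset (Finset (Fin k))) : K :=
  ∏ A ∈ F.filter (fun A => 1 < A.card), h (childCount F A)

/-!
Cutting a tree at its root splits its leaf set `S` into the leaf sets of the root's subtrees, a set
partition of `S` into at least two blocks; this makes the tree sums satisfy
`T(S) = ∑_P h_{|P|} ∏_{B ∈ P} T(B)`, with `T(∅) = 0` and `T({a}) = 1`. On the other side,
`f ∘ g = X` says `g_n = ∑_{k ≥ 2} (h_k / k!) [X^n] g^k`, and `n! [X^n] g^k` is the sum, over ordered
`k`-tuples of disjoint blocks covering an `n`-set, of `∏_B |B|! [X^{|B|}] g`, which is `k!` times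
the corresponding sum over unordered partitions. So `|S|! [X^{|S|}] g` obeys the recursion of
`T(S)`, and the two agree by strong induction on `S`.
-/

open Finset PowerSeries Function
open scoped Nat

section

variable {α : Type*}

/-- Ordered partitions of `S` into `k` blocks, where blocks may be empty. -/
noncomputable def disjointCovers (S : Finset α) (k : ℕ) : Finset (Fin k → Finset α) :=
  (Fintype.piFinset fun _ => S.powerset).filter
    fun t => Pairwise (Disjoint on t) ∧ univ.biUnion t = S

theorem mem_disjointCovers {S : Finset α} {k : ℕ} {t : Fin k → Finset α} :
    t ∈ disjointCovers S k ↔ Pairwise (Disjoint on t) ∧ univ.biUnion t = S := by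
  refine mem_filter.trans ⟨And.right, fun ht => ⟨?_, ht⟩⟩
  rw [Fintype.mem_piFinset]
  exact fun j => mem_powerset.2 (ht.2 ▸ subset_biUnion_of_mem t (mem_univ j))

theorem disjointCovers_zero (S : Finset α) :
    disjointCovers S 0 = if S = ∅ then {Fin.elim0} else ∅ := by
  ext t
  simp only [mem_disjointCovers, Subsingleton.pairwise, univ_eq_empty, biUnion_empty, true_and]
  split_ifs with hS <;> simp [hS, eq_comm, Subsingleton.elim t Fin.elim0]

theorem biUnion_univ_cons {k : ℕ} (B : Finset α) (t : Fin k → Finset α) :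
    univ.biUnion (Fin.cons B t : Fin (k + 1) → Finset α) = B ∪ univ.biUnion t := by
  ext x
  simp [Fin.exists_fin_succ]

theorem cons_mem_disjointCovers_succ {S : Finset α} {k : ℕ} {B : Finset α}
    {t : Fin k → Finset α} :
    Fin.cons B t ∈ disjointCovers S (k + 1) ↔ B ⊆ S ∧ t ∈ disjointCovers (S \ B) k := by
  simp only [mem_disjointCovers, pairwise_fin_succ_iff_of_isSymm, onFun, Fin.cons_zero,
    Fin.cons_succ, biUnion_univ_cons]
  constructor
  · rintro ⟨⟨hdisj, ht⟩, rfl⟩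
    have : Disjoint B (univ.biUnion t) := (disjoint_biUnion_right _ _ _).2 fun j _ => hdisj j
    exact ⟨subset_union_left, ht, (union_sdiff_cancel_left this).symm⟩
  · rintro ⟨hB, ht, hU⟩
    refine ⟨⟨fun j => (disjoint_sdiff : Disjoint B (S \ B)).mono_right ?_, ht⟩,
      hU ▸ union_sdiff_of_subset hB⟩
    exact hU ▸ subset_biUnion_of_mem t (mem_univ j)

theorem sum_disjointCovers_succ {M : Type*} [AddCommMonoid M] (S : Finset α) (k : ℕ)
    (f : (Fin (k + 1) → Finset α) → M) :
    ∑ t ∈ disjointCovers S (k + 1), f t =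
      ∑ B ∈ S.powerset, ∑ t ∈ disjointCovers (S \ B) k, f (Fin.cons B t) := by
  rw [sum_sigma']
  refine sum_nbij' (fun t => ⟨t 0, Fin.tail t⟩) (fun x => Fin.cons x.1 x.2) ?_ ?_ ?_ ?_ ?_
  · intro t ht
    rw [← Fin.cons_self_tail t, cons_mem_disjointCovers_succ] at ht
    simpa only [mem_sigma, mem_powerset] using ht
  · rintro ⟨B, t⟩ hx
    rw [mem_sigma, mem_powerset] at hx
    exact cons_mem_disjointCovers_succ.2 hx
  · intro t _
    exact Fin.cons_self_tail t
  · rintro ⟨B, t⟩ _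
    simp only [Fin.cons_zero, Fin.tail_cons]
  · intro t _
    rw [Fin.cons_self_tail]

theorem sum_disjointCovers_prod_factorial_mul_coeff {K : Type*} [CommSemiring K]
    (A : K⟦X⟧) (k : ℕ) (S : Finset α) :
    ∑ t ∈ disjointCovers S k, ∏ j, ((#(t j))! * coeff #(t j) A) = (#S)! * coeff #S (A ^ k) := by
  induction k generalizing S with
  | zero =>
    rw [disjointCovers_zero]
    split_ifs with hS
    · simp [hS]
    · simp [coeff_one, hS]
  | succ k ih =>
    set n := #S
    calc ∑ t ∈ disjointCovers S (k + 1), ∏ j, ((#(t j))! * coeff #(t j) A)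
        = ∑ B ∈ S.powerset, (#B)! * coeff #B A * ((n - #B)! * coeff (n - #B) (A ^ k)) := by
          rw [sum_disjointCovers_succ]
          refine sum_congr rfl fun B hB => ?_
          simp only [Fin.prod_univ_succ, Fin.cons_zero, Fin.cons_succ, ← mul_sum, ih,
            card_sdiff_of_subset (mem_powerset.1 hB)]
          rfl
      _ = ∑ m ∈ range (n + 1),
            n.choose m • (m ! * coeff m A * ((n - m)! * coeff (n - m) (A ^ k))) :=
          sum_powerset_apply_card fun m => m ! * coeff m A * ((n - m)! * coeff (n - m) (A ^ k))
      _ = n ! * coeff n (A ^ (k + 1)) := by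
          rw [pow_succ', coeff_mul, Nat.sum_antidiagonal_eq_sum_range_succ_mk, mul_sum]
          refine sum_congr rfl fun m hm => ?_
          rw [← Nat.choose_mul_factorial_mul_factorial (Nat.lt_succ_iff.1 (mem_range.1 hm)),
            nsmul_eq_mul]
          push_cast
          ring

noncomputable def setPartitions (S : Finset α) : Finset (Finset (Finset α)) :=
  S.powerset.powerset.filter
    fun P => (P : Set (Finset α)).PairwiseDisjoint id ∧ ∅ ∉ P ∧ P.biUnion id = S

theorem mem_setPartitions {S : Finset α} {P : Finset (Finset α)} :
    P ∈ setPartitions S ↔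
      (P : Set (Finset α)).PairwiseDisjoint id ∧ ∅ ∉ P ∧ P.biUnion id = S := by
  refine mem_filter.trans ⟨And.right, fun hP => ⟨?_, hP⟩⟩
  exact mem_powerset.2 fun B hB => mem_powerset.2 (hP.2.2 ▸ subset_biUnion_of_mem id hB)

section setPartitions

variable {S : Finset α} {P : Finset (Finset α)}

theorem subset_of_mem_setPartitions (hP : P ∈ setPartitions S) {B : Finset α} (hB : B ∈ P) :
    B ⊆ S :=
  (mem_setPartitions.1 hP).2.2 ▸ subset_biUnion_of_mem id hB

theorem card_le_of_mem_setPartitions (hP : P ∈ setPartitions S) : #P ≤ #S := by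
  obtain ⟨hdisj, hne, hcover⟩ := mem_setPartitions.1 hP
  exact hcover ▸ card_le_card_biUnion hdisj fun B hB =>
    nonempty_iff_ne_empty.2 fun h => hne (h ▸ hB)

theorem ssubset_of_mem_setPartitions (hP : P ∈ setPartitions S) (hP2 : 2 ≤ #P)
    {B : Finset α} (hB : B ∈ P) : B ⊂ S := by
  obtain ⟨hdisj, hne, -⟩ := mem_setPartitions.1 hP
  obtain ⟨C, hC, hCB⟩ := exists_mem_ne (by omega : 1 < #P) B
  refine ssubset_of_subset_of_ne (subset_of_mem_setPartitions hP hB) fun hBS => ?_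
  obtain ⟨x, hx⟩ := nonempty_iff_ne_empty.2 fun h => hne (h ▸ hC)
  exact disjoint_left.1 (hdisj hC hB hCB) hx (hBS ▸ subset_of_mem_setPartitions hP hC hx)

theorem eq_of_subset_of_mem_setPartitions (hP : P ∈ setPartitions S) {A B C : Finset α}
    (hB : B ∈ P) (hC : C ∈ P) (hA : A ≠ ∅) (hAB : A ⊆ B) (hAC : A ⊆ C) : B = C := by
  by_contra hBC
  obtain ⟨x, hx⟩ := nonempty_iff_ne_empty.2 hA
  exact disjoint_left.1 ((mem_setPartitions.1 hP).1 hB hC hBC) (hAB hx) (hAC hx)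

theorem two_le_card_of_mem_setPartitions (hP : P ∈ setPartitions S) (hS : S.Nonempty)
    (hproper : ∀ B ∈ P, B ⊂ S) : 2 ≤ #P := by
  obtain ⟨-, -, hcover⟩ := mem_setPartitions.1 hP
  by_contra hlt
  obtain ⟨x, hx⟩ := hS
  obtain ⟨B, hB, hxB⟩ := mem_biUnion.1 (hcover ▸ hx)
  refine (hproper B hB).not_subset fun y hy => ?_
  obtain ⟨C, hC, hyC⟩ := mem_biUnion.1 (hcover ▸ hy)
  exact card_le_one.1 (by omega) C hC B hB ▸ hyC

end setPartitions

theorem injective_of_pairwise_disjoint {k : ℕ} {t : Fin k → Finset α}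
    (hdisj : Pairwise (Disjoint on t)) (hne : ∀ j, t j ≠ ∅) : Injective t :=
  pairwise_ne_iff_injective.1 <| hdisj.mono fun _ j hij heq =>
    hne j <| disjoint_self.1 <| by rwa [onFun, heq] at hij

theorem image_mem_setPartitions {S : Finset α} {k : ℕ} {t : Fin k → Finset α}
    (ht : t ∈ disjointCovers S k) (hne : ∀ j, t j ≠ ∅) : univ.image t ∈ setPartitions S := by
  obtain ⟨hdisj, hcover⟩ := mem_disjointCovers.1 ht
  refine mem_setPartitions.2 ⟨?_, fun h => ?_, by rw [image_biUnion]; exact hcover⟩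
  · simp only [coe_image, coe_univ, Set.image_univ]
    rintro _ ⟨i, rfl⟩ _ ⟨j, rfl⟩ hij
    exact hdisj fun h => hij (congrArg t h)
  · obtain ⟨j, -, hj⟩ := mem_image.1 h
    exact hne j hj

theorem card_filter_image_eq_factorial {S : Finset α} {k : ℕ} {P : Finset (Finset α)}
    (hP : P ∈ setPartitions S) (hPk : #P = k) :
    #{t ∈ disjointCovers S k | (∀ j, t j ≠ ∅) ∧ univ.image t = P} = k ! := by
  obtain ⟨hdisj, hne, hcover⟩ := mem_setPartitions.1 hP
  have hequivs : #(univ : Finset (Fin k ≃ P)) = k ! := by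
    rw [card_univ, Fintype.card_equiv (Fintype.equivFinOfCardEq (by simp [hPk])).symm,
      Fintype.card_fin]
  rw [← hequivs, eq_comm]
  refine card_bij (fun e _ j => (e j : Finset α)) (fun e _ => ?_) ?_ ?_
  · have himage : univ.image (fun j => (e j : Finset α)) = P := by
      ext B
      simpa using ⟨fun ⟨j, hj⟩ => hj ▸ (e j).2, fun hB => ⟨e.symm ⟨B, hB⟩, by simp⟩⟩
    have hcover' : univ.biUnion (fun j => (e j : Finset α)) = S :=
      calc _ = (univ.image fun j => (e j : Finset α)).biUnion id := image_biUnion.symm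
        _ = S := by rw [himage, hcover]
    refine mem_filter.2 ⟨mem_disjointCovers.2 ⟨fun i j hij => ?_, hcover'⟩,
      fun j h => hne (h ▸ (e j).2), himage⟩
    exact hdisj (e i).2 (e j).2 fun h => hij (e.injective (Subtype.ext h))
  · intro e₁ _ e₂ _ h
    exact Equiv.ext fun j => Subtype.ext (congrFun h j)
  · intro t ht
    obtain ⟨htD, htne, himage⟩ := mem_filter.1 ht
    have hmem : ∀ j, t j ∈ P := fun j => himage ▸ mem_image_of_mem t (mem_univ j)
    refine ⟨Equiv.ofBijective (fun j => ⟨t j, hmem j⟩) ⟨fun i j h => ?_, fun B => ?_⟩,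
      mem_univ _, rfl⟩
    · exact injective_of_pairwise_disjoint (mem_disjointCovers.1 htD).1 htne
        (congrArg Subtype.val h)
    · obtain ⟨j, -, hj⟩ := mem_image.1 (himage ▸ B.2 : (B : Finset α) ∈ univ.image t)
      exact ⟨j, Subtype.ext hj⟩

theorem sum_disjointCovers_prod_eq_factorial_mul {K : Type*} [CommSemiring K]
    (w : Finset α → K) (hw : w ∅ = 0) (S : Finset α) (k : ℕ) :
    ∑ t ∈ disjointCovers S k, ∏ j, w (t j) =
      k ! * ∑ P ∈ setPartitions S with #P = k, ∏ B ∈ P, w B := by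
  have hnonempty : ∀ t ∈ disjointCovers S k, ∏ j, w (t j) ≠ 0 → ∀ j, t j ≠ ∅ :=
    fun t _ ht j hj => ht (prod_eq_zero (mem_univ j) (hj ▸ hw))
  have hmaps : ∀ t ∈ {t ∈ disjointCovers S k | ∀ j, t j ≠ ∅},
      univ.image t ∈ {P ∈ setPartitions S | #P = k} := by
    intro t ht
    obtain ⟨htD, htne⟩ := mem_filter.1 ht
    refine mem_filter.2 ⟨image_mem_setPartitions htD htne, ?_⟩
    rw [card_image_of_injective _
      (injective_of_pairwise_disjoint (mem_disjointCovers.1 htD).1 htne), card_univ,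
      Fintype.card_fin]
  rw [← sum_filter_of_ne hnonempty, ← sum_fiberwise_of_maps_to hmaps, mul_sum]
  refine sum_congr rfl fun P hP => ?_
  obtain ⟨hP, hPk⟩ := mem_filter.1 hP
  rw [filter_filter, ← card_filter_image_eq_factorial hP hPk, ← nsmul_eq_mul, ← sum_const]
  refine sum_congr rfl fun t ht => ?_
  obtain ⟨htD, htne, himage⟩ := mem_filter.1 ht
  rw [← himage, prod_image
    (injective_of_pairwise_disjoint (mem_disjointCovers.1 htD).1 htne).injOn]

structure IsTreeFamOn (S : Finset α) (F : Finset (Finset α)) : Prop where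
  subset : ∀ A ∈ F, A ⊆ S
  laminar : ∀ A ∈ F, ∀ B ∈ F, A ⊆ B ∨ B ⊆ A ∨ Disjoint A B
  self_mem : S ∈ F
  singleton_mem : ∀ i ∈ S, {i} ∈ F
  empty_notMem : ∅ ∉ F

noncomputable def treeFamsOn (S : Finset α) : Finset (Finset (Finset α)) :=
  S.powerset.powerset.filter (IsTreeFamOn S)

theorem mem_treeFamsOn {S : Finset α} {F : Finset (Finset α)} :
    F ∈ treeFamsOn S ↔ IsTreeFamOn S F :=
  mem_filter.trans ⟨And.right, fun hF =>
    ⟨mem_powerset.2 fun A hA => mem_powerset.2 (hF.subset A hA), hF⟩⟩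

noncomputable def children (F : Finset (Finset α)) (A : Finset α) : Finset (Finset α) :=
  F.filter fun B => B ⊂ A ∧ ¬∃ C ∈ F, B ⊂ C ∧ C ⊂ A

noncomputable def energy {K : Type*} [CommSemiring K] (h : ℕ → K) (F : Finset (Finset α)) : K :=
  ∏ A ∈ F with 1 < #A, h #(children F A)

noncomputable def treeSum {K : Type*} [CommSemiring K] (h : ℕ → K) (S : Finset α) : K :=
  ∑ F ∈ treeFamsOn S, energy h F

section treeSum

variable {K : Type*} [CommSemiring K] (h : ℕ → K)

theorem treeSum_empty : treeSum h (∅ : Finset α) = 0 := by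
  rw [treeSum, sum_eq_zero]
  intro F hF
  have hF := mem_treeFamsOn.1 hF
  exact absurd hF.self_mem hF.empty_notMem

theorem treeFamsOn_singleton (a : α) : treeFamsOn {a} = {{{a}}} := by
  ext F
  rw [mem_treeFamsOn, mem_singleton]
  constructor
  · intro hF
    ext A
    rw [mem_singleton]
    refine ⟨fun hA => ?_, fun hA => hA ▸ hF.self_mem⟩
    exact (subset_singleton_iff.1 (hF.subset A hA)).resolve_left fun h => hF.empty_notMem (h ▸ hA)
  · rintro rfl
    refine ⟨?_, ?_, mem_singleton_self _, ?_, ?_⟩ <;> simp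

theorem treeSum_singleton (a : α) : treeSum h {a} = 1 := by
  rw [treeSum, treeFamsOn_singleton, sum_singleton, energy, filter_singleton, if_neg (by simp),
    prod_empty]

end treeSum

section children

variable {S : Finset α} {F : Finset (Finset α)}

theorem exists_mem_children_superset {A : Finset α} (hA : A ∈ F) (hAS : A ⊂ S) :
    ∃ B ∈ children F S, A ⊆ B := by
  obtain ⟨B, hB, hBmax⟩ := exists_max_image {C ∈ F | A ⊆ C ∧ C ⊂ S} card
    ⟨A, mem_filter.2 ⟨hA, subset_rfl, hAS⟩⟩
  obtain ⟨hBF, hAB, hBS⟩ := mem_filter.1 hB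
  refine ⟨B, mem_filter.2 ⟨hBF, hBS, fun ⟨C, hCF, hBC, hCS⟩ => ?_⟩, hAB⟩
  exact (card_lt_card hBC).not_ge (hBmax C (mem_filter.2 ⟨hCF, hAB.trans hBC.subset, hCS⟩))

theorem children_filter_subset {A B : Finset α} (hAB : A ⊆ B) :
    children (F.filter (· ⊆ B)) A = children F A := by
  ext C
  simp only [children, mem_filter]
  constructor
  · rintro ⟨⟨hCF, -⟩, hCA, hmax⟩
    exact ⟨hCF, hCA, fun ⟨D, hDF, hCD, hDA⟩ => hmax ⟨D, ⟨hDF, hDA.subset.trans hAB⟩, hCD, hDA⟩⟩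
  · rintro ⟨hCF, hCA, hmax⟩
    exact ⟨⟨hCF, hCA.subset.trans hAB⟩, hCA,
      fun ⟨D, ⟨hDF, _⟩, hCD, hDA⟩ => hmax ⟨D, hDF, hCD, hDA⟩⟩

namespace IsTreeFamOn

variable (hF : IsTreeFamOn S F)
include hF

theorem children_mem_setPartitions (hS : 1 < #S) : children F S ∈ setPartitions S := by
  refine mem_setPartitions.2 ⟨?_, fun h => hF.empty_notMem (mem_filter.1 h).1, ?_⟩
  · intro B hB C hC hBC
    obtain ⟨hBF, hBS, hBmax⟩ := mem_filter.1 hB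
    obtain ⟨hCF, hCS, hCmax⟩ := mem_filter.1 hC
    rcases hF.laminar B hBF C hCF with hsub | hsub | hdisj
    · exact absurd ⟨C, hCF, ssubset_of_subset_of_ne hsub hBC, hCS⟩ hBmax
    · exact absurd ⟨B, hBF, ssubset_of_subset_of_ne hsub (Ne.symm hBC), hBS⟩ hCmax
    · exact hdisj
  · refine subset_antisymm (biUnion_subset.2 fun B hB => (mem_filter.1 hB).2.1.subset) ?_
    intro i hi
    have hiS : {i} ⊂ S := ssubset_of_subset_of_ne (singleton_subset_iff.2 hi) fun h => by
      simp [← h] at hS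
    obtain ⟨B, hB, hiB⟩ := exists_mem_children_superset (hF.singleton_mem i hi) hiS
    exact mem_biUnion.2 ⟨B, hB, hiB (mem_singleton_self i)⟩

theorem two_le_card_children (hS : 1 < #S) : 2 ≤ #(children F S) :=
  two_le_card_of_mem_setPartitions (hF.children_mem_setPartitions hS) (card_pos.1 (by omega))
    fun _ hB => (mem_filter.1 hB).2.1

theorem filter_subset {B : Finset α} (hB : B ∈ F) : IsTreeFamOn B (F.filter (· ⊆ B)) where
  subset _ hA := (mem_filter.1 hA).2
  laminar A hA C hC := hF.laminar A (mem_filter.1 hA).1 C (mem_filter.1 hC).1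
  self_mem := mem_filter.2 ⟨hB, subset_rfl⟩
  singleton_mem i hi :=
    mem_filter.2 ⟨hF.singleton_mem i (hF.subset B hB hi), singleton_subset_iff.2 hi⟩
  empty_notMem h := hF.empty_notMem (mem_filter.1 h).1

theorem insert_biUnion_children (hS : 1 < #S) :
    insert S ((children F S).biUnion fun B => F.filter (· ⊆ B)) = F := by
  ext A
  rw [mem_insert, mem_biUnion]
  constructor
  · rintro (rfl | ⟨B, -, hA⟩)
    exacts [hF.self_mem, (mem_filter.1 hA).1]
  · intro hA
    by_cases hAS : A = S
    · exact Or.inl hAS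
    obtain ⟨B, hB, hAB⟩ :=
      exists_mem_children_superset hA (ssubset_of_subset_of_ne (hF.subset A hA) hAS)
    exact Or.inr ⟨B, hB, mem_filter.2 ⟨hA, hAB⟩⟩

theorem energy_eq {K : Type*} [CommSemiring K] (h : ℕ → K) (hS : 1 < #S) :
    energy h F = h #(children F S) * ∏ B ∈ children F S, energy h (F.filter (· ⊆ B)) := by
  have hpart := hF.children_mem_setPartitions hS
  have hdisj : (children F S : Set (Finset α)).PairwiseDisjoint
      fun B => (F.filter (· ⊆ B)).filter (1 < #·) := by
    intro B hB C hC hBC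
    refine disjoint_left.2 fun A hAB hAC => hBC ?_
    obtain ⟨hA, hAB⟩ := mem_filter.1 (mem_filter.1 hAB).1
    exact eq_of_subset_of_mem_setPartitions hpart hB hC (fun h => hF.empty_notMem (h ▸ hA))
      hAB (mem_filter.1 (mem_filter.1 hAC).1).2
  have hS_notMem : S ∉ (children F S).biUnion fun B => (F.filter (· ⊆ B)).filter (1 < #·) := by
    simp only [mem_biUnion, mem_filter, not_exists, not_and]
    exact fun B hB ⟨_, hSB⟩ _ => (mem_filter.1 hB).2.1.not_subset hSB
  have hsplit : F.filter (1 < #·) =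
      insert S ((children F S).biUnion fun B => (F.filter (· ⊆ B)).filter (1 < #·)) := by
    conv_lhs => rw [← hF.insert_biUnion_children hS]
    rw [filter_insert, if_pos hS, filter_biUnion]
  rw [energy, hsplit, prod_insert hS_notMem, prod_biUnion hdisj]
  refine congrArg _ (prod_congr rfl fun B _ => prod_congr rfl fun A hA => ?_)
  rw [children_filter_subset (mem_filter.1 (mem_filter.1 hA).1).2]

end IsTreeFamOn

end children

noncomputable def graft (S : Finset α) (P : Finset (Finset α)) (p : ∀ B ∈ P, Finset (Finset α)) :
    Finset (Finset α) :=
  insert S (P.attach.biUnion fun B => p B.1 B.2)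

section graft

variable {S : Finset α} {P : Finset (Finset α)} {p : ∀ B ∈ P, Finset (Finset α)}

theorem mem_graft {A : Finset α} : A ∈ graft S P p ↔ A = S ∨ ∃ B, ∃ hB : B ∈ P, A ∈ p B hB := by
  simp [graft]

variable (hP : P ∈ setPartitions S) (hp : ∀ B (hB : B ∈ P), IsTreeFamOn B (p B hB))
include hP hp

theorem subset_of_mem_graft {A : Finset α} (hA : A ∈ graft S P p) : A ⊆ S := by
  obtain rfl | ⟨B, hB, hA⟩ := mem_graft.1 hA
  exacts [subset_rfl, ((hp B hB).subset A hA).trans (subset_of_mem_setPartitions hP hB)]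

variable (hP2 : 2 ≤ #P)
include hP2

theorem isTreeFamOn_graft : IsTreeFamOn S (graft S P p) where
  subset _ := subset_of_mem_graft hP hp
  laminar A hA A' hA' := by
    obtain rfl | ⟨B, hB, hAB⟩ := mem_graft.1 hA
    · exact Or.inr (Or.inl (subset_of_mem_graft hP hp hA'))
    obtain rfl | ⟨B', hB', hAB'⟩ := mem_graft.1 hA'
    · exact Or.inl (subset_of_mem_graft hP hp hA)
    by_cases hBB' : B = B'
    · subst hBB'
      exact (hp B hB).laminar A hAB A' hAB'
    · exact Or.inr (Or.inr (((mem_setPartitions.1 hP).1 hB hB' hBB').mono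
        ((hp B hB).subset A hAB) ((hp B' hB').subset A' hAB')))
  self_mem := mem_graft.2 (Or.inl rfl)
  singleton_mem i hi := by
    obtain ⟨B, hB, hiB⟩ := mem_biUnion.1 ((mem_setPartitions.1 hP).2.2 ▸ hi)
    exact mem_graft.2 (Or.inr ⟨B, hB, (hp B hB).singleton_mem i hiB⟩)
  empty_notMem h := by
    obtain h | ⟨B, hB, h⟩ := mem_graft.1 h
    · obtain ⟨B, hB⟩ := card_pos.1 (by omega : 0 < #P)
      exact not_ssubset_empty B (h ▸ ssubset_of_mem_setPartitions hP hP2 hB)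
    · exact (hp B hB).empty_notMem h

theorem children_graft : children (graft S P p) S = P := by
  have hblock : ∀ B (hB : B ∈ P), B ∈ graft S P p := fun B hB =>
    mem_graft.2 (Or.inr ⟨B, hB, (hp B hB).self_mem⟩)
  ext B
  constructor
  · intro hB
    obtain ⟨hBgraft, hBS, hBmax⟩ := mem_filter.1 hB
    obtain rfl | ⟨C, hC, hBC⟩ := mem_graft.1 hBgraft
    · exact absurd hBS (ssubset_irrefl _)
    obtain rfl | hne := eq_or_ne B C
    · exact hC
    exact absurd ⟨C, hblock C hC, ssubset_of_subset_of_ne ((hp C hC).subset B hBC) hne,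
      ssubset_of_mem_setPartitions hP hP2 hC⟩ hBmax
  · intro hB
    refine mem_filter.2 ⟨hblock B hB, ssubset_of_mem_setPartitions hP hP2 hB, ?_⟩
    rintro ⟨A, hA, hBA, hAS⟩
    obtain rfl | ⟨C, hC, hAC⟩ := mem_graft.1 hA
    · exact absurd hAS (ssubset_irrefl _)
    have hAC := (hp C hC).subset A hAC
    obtain rfl := eq_of_subset_of_mem_setPartitions hP hB hC
      (fun h => (mem_setPartitions.1 hP).2.1 (h ▸ hB)) subset_rfl (hBA.subset.trans hAC)
    exact hBA.not_subset hAC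

theorem graft_filter_subset {B : Finset α} (hB : B ∈ P) :
    (graft S P p).filter (· ⊆ B) = p B hB := by
  ext A
  rw [mem_filter]
  constructor
  · rintro ⟨hA, hAB⟩
    obtain rfl | ⟨C, hC, hAC⟩ := mem_graft.1 hA
    · exact absurd hAB (ssubset_of_mem_setPartitions hP hP2 hB).not_subset
    obtain rfl := eq_of_subset_of_mem_setPartitions hP hB hC
      (fun h => (hp C hC).empty_notMem (h ▸ hAC)) hAB ((hp C hC).subset A hAC)
    exact hAC
  · exact fun hA => ⟨mem_graft.2 (Or.inr ⟨B, hB, hA⟩), (hp B hB).subset A hA⟩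

end graft

section treeSum

variable {K : Type*} [CommSemiring K] (h : ℕ → K)

theorem sum_energy_filter_children_eq {S : Finset α} {P : Finset (Finset α)}
    (hP : P ∈ setPartitions S) (hP2 : 2 ≤ #P) :
    ∑ F ∈ treeFamsOn S with children F S = P, energy h F = h #P * ∏ B ∈ P, treeSum h B := by
  have hS : 1 < #S := lt_of_lt_of_le hP2 (card_le_of_mem_setPartitions hP)
  simp only [treeSum]
  rw [prod_sum, mul_sum]
  refine sum_nbij' (fun F B _ => F.filter (· ⊆ B)) (graft S P) ?_ ?_ ?_ ?_ ?_
  · intro F hF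
    obtain ⟨hFS, rfl⟩ := mem_filter.1 hF
    exact mem_pi.2 fun B hB =>
      mem_treeFamsOn.2 ((mem_treeFamsOn.1 hFS).filter_subset (mem_filter.1 hB).1)
  · intro p hp
    have hp : ∀ B hB, IsTreeFamOn B (p B hB) := fun B hB => mem_treeFamsOn.1 (mem_pi.1 hp B hB)
    exact mem_filter.2 ⟨mem_treeFamsOn.2 (isTreeFamOn_graft hP hp hP2), children_graft hP hp hP2⟩
  · intro F hF
    obtain ⟨hFS, rfl⟩ := mem_filter.1 hF
    rw [graft, attach_biUnion (f := fun B => F.filter (· ⊆ B))]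
    exact (mem_treeFamsOn.1 hFS).insert_biUnion_children hS
  · intro p hp
    have hp : ∀ B hB, IsTreeFamOn B (p B hB) := fun B hB => mem_treeFamsOn.1 (mem_pi.1 hp B hB)
    funext B hB
    exact graft_filter_subset hP hp hP2 hB
  · intro F hF
    obtain ⟨hFS, rfl⟩ := mem_filter.1 hF
    rw [(mem_treeFamsOn.1 hFS).energy_eq h hS, ← prod_attach]

theorem treeSum_eq_sum_setPartitions {S : Finset α} (hS : 1 < #S) :
    treeSum h S = ∑ P ∈ setPartitions S with 2 ≤ #P, h #P * ∏ B ∈ P, treeSum h B := by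
  have hmaps : ∀ F ∈ treeFamsOn S, children F S ∈ {P ∈ setPartitions S | 2 ≤ #P} := fun F hF =>
    mem_filter.2 ⟨(mem_treeFamsOn.1 hF).children_mem_setPartitions hS,
      (mem_treeFamsOn.1 hF).two_le_card_children hS⟩
  rw [treeSum, ← sum_fiberwise_of_maps_to hmaps]
  exact sum_congr rfl fun P hP =>
    sum_energy_filter_children_eq h (mem_filter.1 hP).1 (mem_filter.1 hP).2

end treeSum

section inverse

variable {K : Type*} [CommSemiring K] [Algebra ℚ K]

theorem algebraMap_inv_factorial_mul (k : ℕ) : algebraMap ℚ K (k ! : ℚ)⁻¹ * (k ! : K) = 1 := by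
  rw [← map_natCast (algebraMap ℚ K), ← map_mul, inv_mul_cancel₀ (by positivity), map_one]

theorem treeSum_eq_factorial_mul_coeff (h : ℕ → K) (g : K⟦X⟧)
    (hg0 : constantCoeff g = 0) (hg1 : coeff 1 g = 1)
    (hrec : ∀ n, 2 ≤ n →
      coeff n g = ∑ k ∈ Icc 2 n, algebraMap ℚ K (k ! : ℚ)⁻¹ * h k * coeff n (g ^ k))
    (S : Finset α) : treeSum h S = (#S)! * coeff #S g := by
  induction S using Finset.strongInduction with
  | H S ih =>
  obtain hS | hS | hS : #S = 0 ∨ #S = 1 ∨ 1 < #S := by omega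
  · rw [card_eq_zero.1 hS, treeSum_empty, card_empty, coeff_zero_eq_constantCoeff, hg0, mul_zero]
  · obtain ⟨a, rfl⟩ := card_eq_one.1 hS
    rw [treeSum_singleton, card_singleton, hg1, Nat.factorial_one, Nat.cast_one, mul_one]
  set u : Finset α → K := fun B => (#B)! * coeff #B g
  have hu : u ∅ = 0 := by simp [u, hg0]
  calc treeSum h S = ∑ P ∈ setPartitions S with 2 ≤ #P, h #P * ∏ B ∈ P, u B := by
        rw [treeSum_eq_sum_setPartitions h hS]
        refine sum_congr rfl fun P hP => ?_
        obtain ⟨hP, hP2⟩ := mem_filter.1 hP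
        exact congrArg _ (prod_congr rfl fun B hB => ih B (ssubset_of_mem_setPartitions hP hP2 hB))
    _ = ∑ k ∈ Icc 2 #S, h k * ∑ P ∈ setPartitions S with #P = k, ∏ B ∈ P, u B := by
        have hfiber : ∀ k ∈ Icc 2 #S, h k * ∑ P ∈ setPartitions S with #P = k, ∏ B ∈ P, u B =
            ∑ P ∈ setPartitions S with #P = k, h #P * ∏ B ∈ P, u B := fun k _ => by
          rw [mul_sum]
          exact sum_congr rfl fun P hP => by rw [(mem_filter.1 hP).2]
        rw [sum_congr rfl hfiber, sum_fiberwise_eq_sum_filter]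
        refine sum_congr (filter_congr fun P hP => ?_) fun _ _ => rfl
        simp [card_le_of_mem_setPartitions hP]
    _ = ∑ k ∈ Icc 2 #S, algebraMap ℚ K (k ! : ℚ)⁻¹ * h k *
          ∑ t ∈ disjointCovers S k, ∏ j, u (t j) := by
        refine sum_congr rfl fun k _ => ?_
        rw [sum_disjointCovers_prod_eq_factorial_mul u hu, mul_right_comm, ← mul_assoc,
          algebraMap_inv_factorial_mul, one_mul, mul_comm]
    _ = (#S)! * coeff #S g := by
        rw [hrec #S hS, mul_sum]
        refine sum_congr rfl fun k _ => ?_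
        rw [sum_disjointCovers_prod_factorial_mul_coeff]
        ring

end inverse

theorem isTreeFamOn_univ_iff {k : ℕ} {F : Finset (Finset (Fin k))} :
    IsTreeFamOn univ F ↔ IsTreeFam F :=
  ⟨fun hF => ⟨hF.laminar, hF.self_mem, fun i => hF.singleton_mem i (mem_univ i), hF.empty_notMem⟩,
    fun ⟨hlam, huniv, hsing, hemp⟩ =>
      ⟨fun A _ => subset_univ A, hlam, huniv, fun i _ => hsing i, hemp⟩⟩

theorem treeSum_univ_eq_sum_treeEnergy {K : Type*} [CommRing K] (h : ℕ → K) (k : ℕ) :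
    treeSum h (univ : Finset (Fin k)) =
      ∑ F ∈ (univ : Finset (Finset (Finset (Fin k)))).filter IsTreeFam, treeEnergy h F := by
  refine sum_congr ?_ fun F _ => ?_
  · ext F
    simp [mem_treeFamsOn, isTreeFamOn_univ_iff]
  · exact prod_congr rfl fun A _ => congrArg h (by simp only [childCount, children]; congr!)

theorem coeff_eq_of_pcomp_eq_X {K : Type*} [CommRing K] {f u : K⟦X⟧} (hinv : pcomp f u = X)
    (hf0 : coeff 0 f = 0) (hf1 : coeff 1 f = 1) {n : ℕ} (hn : 1 ≤ n) :
    coeff n u = (if n = 1 then 1 else 0) - ∑ k ∈ Icc 2 n, coeff k f * coeff n (u ^ k) := by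
  have hsplit : range (n + 1) = insert 0 (insert 1 (Icc 2 n)) := by
    ext k
    simp only [mem_range, mem_insert, mem_Icc]
    omega
  have hcoeff := congrArg (coeff n) hinv
  rw [pcomp, coeff_mk, coeff_X, hsplit, sum_insert (by simp), sum_insert (by simp), hf0, hf1,
    zero_mul, zero_add, one_mul, pow_one] at hcoeff
  rw [← hcoeff, add_sub_cancel_right]

end

theorem inversion_one_dimensional_general {K : Type*} [CommRing K] [Algebra ℚ K]
    (h : ℕ → K) (g : PowerSeries K)
    (f : PowerSeries K)
    (hfdef : f = PowerSeries.mk fun k =>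
      if k = 1 then 1 else
      if 2 ≤ k then -(algebraMap ℚ K ((k.factorial : ℚ)⁻¹) * h k) else 0)
    (hg0 : PowerSeries.constantCoeff g = 0)
    (hinv₁ : pcomp f g = PowerSeries.X) :
    PowerSeries.coeff 0 g = 0 ∧ PowerSeries.coeff 1 g = 1 ∧
      ∀ k : ℕ, 2 ≤ k →
        PowerSeries.coeff k g =
          algebraMap ℚ K ((k.factorial : ℚ)⁻¹) *
            ∑ F ∈ (Finset.univ : Finset (Finset (Finset (Fin k)))).filter IsTreeFam,
              treeEnergy h F := by
  have hf0 : coeff 0 f = 0 := by simp [hfdef]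
  have hf1 : coeff 1 f = 1 := by simp [hfdef]
  have hg1 : coeff 1 g = 1 := by simpa using coeff_eq_of_pcomp_eq_X hinv₁ hf0 hf1 le_rfl
  have hrec (n : ℕ) (hn : 2 ≤ n) :
      coeff n g = ∑ k ∈ Icc 2 n, algebraMap ℚ K (k ! : ℚ)⁻¹ * h k * coeff n (g ^ k) := by
    rw [coeff_eq_of_pcomp_eq_X hinv₁ hf0 hf1 (by omega), if_neg (by omega), zero_sub,
      ← sum_neg_distrib]
    refine sum_congr rfl fun k hk => ?_
    rw [hfdef, coeff_mk, if_neg (by rw [mem_Icc] at hk; omega), if_pos (mem_Icc.1 hk).1, neg_mul, neg_neg]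
  refine ⟨by rwa [coeff_zero_eq_constantCoeff], hg1, fun k _ => ?_⟩
  rw [← treeSum_univ_eq_sum_treeEnergy, treeSum_eq_factorial_mul_coeff h g hg0 hg1 hrec,
    card_univ, Fintype.card_fin, ← mul_assoc, algebraMap_inv_factorial_mul, one_mul]

/-- if `g` is the compositional inverse of
`f(X) = X - ∑_{k≥2} (hₖ/k!) Xᵏ`, then `g₀ = 0`, `g₁ = 1` and for `k ≥ 2`,
`gₖ = ∑_{T ∈ 𝕊ₖ} E_h(T)` (in exponential normalization `g(X) = ∑ (gₖ/k!) Xᵏ`). -/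
theorem inversion_one_dimensional {K : Type*} [CommRing K] [Algebra ℚ K]
    (h : ℕ → K) (g : PowerSeries K)
    (f : PowerSeries K)
    (hfdef : f = PowerSeries.mk fun k =>
      if k = 1 then 1 else
      if 2 ≤ k then -(algebraMap ℚ K ((k.factorial : ℚ)⁻¹) * h k) else 0)
    (hg0 : PowerSeries.constantCoeff g = 0)
    (hinv₁ : pcomp f g = PowerSeries.X) (hinv₂ : pcomp g f = PowerSeries.X) :
    PowerSeries.coeff 0 g = 0 ∧ PowerSeries.coeff 1 g = 1 ∧
      ∀ k : ℕ, 2 ≤ k →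
        PowerSeries.coeff k g =
          algebraMap ℚ K ((k.factorial : ℚ)⁻¹) *
            ∑ F ∈ (Finset.univ : Finset (Finset (Finset (Fin k)))).filter IsTreeFam,
              treeEnergy h F :=
  inversion_one_dimensional_general h g f hfdef hg0 hinv₁
end

section
/- Define Φ on sequences H = (h_k)_{k≥2} with values in a commutative ring by Φ(H)_k := −∑_{T ∈ S_k} E_h(T), where S_k is the set of leaf-labelled rooted trees with k leaves in which every internal vertex has at least two children, and E_h(T) = ∏_{v internal} h_{(number of children of v)}. Then Φ is an involution: Φ(Φ(H)) = H. -/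
open scoped Classical

/-- The map `Φ(H)ₖ := - ∑_{T ∈ 𝕊ₖ} E_H(T)`. -/
noncomputable def Phi {K : Type*} [CommRing K] (h : ℕ → K) : ℕ → K := fun k =>
  -∑ F ∈ (Finset.univ : Finset (Finset (Finset (Fin k)))).filter IsTreeFam, treeEnergy h F

/-!
Expanding each factor `Φ(h)_c = -∑ E_h` of `E_{Φ(h)}(F)` writes `Φ(Φ(h))_k` as a signed sum over
trees `F` together with a tree `p A` on the children of each internal vertex `A` of `F`.
Substituting every `p A` into its vertex ("grafting") yields a tree `G` with
`E_h(G) = ∏_A E_h(p A)`, and `(F, p)` is recovered from `G` and the set `S` of internal vertices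
of `F`, which is any set of internal vertices of `G` containing the root. The sign is
`(-1)^|S|`, so summing over `S` cancels every `G` except the corolla, whose energy is `h_k`.
-/

namespace Finset

open Function

variable {ι α : Type*} [DecidableEq α] {b : ι → Finset α} {s t : Finset ι}

lemma subset_biUnion_iff_mem (hb : ∀ i, (b i).Nonempty) (hd : Pairwise (Disjoint on b))
    {i : ι} : b i ⊆ s.biUnion b ↔ i ∈ s := by
  refine ⟨fun h => ?_, subset_biUnion_of_mem b⟩
  obtain ⟨x, hx⟩ := hb i
  obtain ⟨j, hj, hxj⟩ := mem_biUnion.1 (h hx)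
  by_contra hi
  exact disjoint_left.1 (hd fun hij : i = j => hi (hij ▸ hj)) hx hxj

lemma biUnion_subset_biUnion_iff (hb : ∀ i, (b i).Nonempty) (hd : Pairwise (Disjoint on b)) :
    s.biUnion b ⊆ t.biUnion b ↔ s ⊆ t :=
  ⟨fun h _ hi => (subset_biUnion_iff_mem hb hd).1 ((subset_biUnion_of_mem b hi).trans h),
    biUnion_subset_biUnion_of_subset_left b⟩

lemma biUnion_ssubset_biUnion_iff (hb : ∀ i, (b i).Nonempty) (hd : Pairwise (Disjoint on b)) :
    s.biUnion b ⊂ t.biUnion b ↔ s ⊂ t := by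
  simp only [ssubset_def, biUnion_subset_biUnion_iff hb hd]

lemma biUnion_left_injective (hb : ∀ i, (b i).Nonempty) (hd : Pairwise (Disjoint on b)) :
    Injective fun s : Finset ι => s.biUnion b := fun _ _ h =>
  ((biUnion_subset_biUnion_iff hb hd).1 h.le).antisymm ((biUnion_subset_biUnion_iff hb hd).1 h.ge)

lemma disjoint_biUnion_biUnion_iff (hb : ∀ i, (b i).Nonempty) (hd : Pairwise (Disjoint on b)) :
    Disjoint (s.biUnion b) (t.biUnion b) ↔ Disjoint s t := by
  simp only [disjoint_biUnion_left, disjoint_biUnion_right]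
  refine ⟨fun h => disjoint_left.2 fun i hs ht => ?_, fun h i ht j hs => hd ?_⟩
  · exact (hb i).ne_empty (disjoint_self.1 (h i ht i hs))
  · rintro rfl
    exact disjoint_left.1 h hs ht

lemma sum_powerset_filter_mem_neg_one_pow {R : Type*} [CommRing R] {M : Finset α} {a : α}
    (ha : a ∈ M) :
    ∑ S ∈ M.powerset with a ∈ S, (-1 : R) ^ S.card = if M = {a} then -1 else 0 := by
  have hsum : ∑ S ∈ (M.erase a).powerset, (-1 : R) ^ S.card = if M.erase a = ∅ then 1 else 0 := by
    exact_mod_cast congrArg (Int.cast : ℤ → R) sum_powerset_neg_one_pow_card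
  nth_rewrite 1 [← insert_erase ha]
  rw [sum_filter, sum_powerset_insert (notMem_erase a M)]
  have hout : ∀ S ∈ (M.erase a).powerset, a ∉ S := fun S hS haS =>
    notMem_erase a M (mem_powerset.1 hS haS)
  rw [sum_eq_zero fun S hS => if_neg (hout S hS), zero_add,
    sum_congr rfl fun S hS => by
      rw [if_pos (mem_insert_self a S), card_insert_of_notMem (hout S hS), pow_succ, mul_neg_one],
    sum_neg_distrib, hsum]
  by_cases hM : M = {a} <;> simp [erase_eq_empty_iff, ne_empty_of_mem ha, hM]

end Finset

section IsTreeFam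

open Finset

variable {k : ℕ} {F : Finset (Finset (Fin k))} {A : Finset (Fin k)}

lemma IsTreeFam.laminar (hF : IsTreeFam F) :
    ∀ A ∈ F, ∀ B ∈ F, A ⊆ B ∨ B ⊆ A ∨ Disjoint A B := hF.1

lemma IsTreeFam.univ_mem (hF : IsTreeFam F) : univ ∈ F := hF.2.1

lemma IsTreeFam.singleton_mem (hF : IsTreeFam F) (i : Fin k) : {i} ∈ F := hF.2.2.1 i

lemma IsTreeFam.empty_notMem (hF : IsTreeFam F) : ∅ ∉ F := hF.2.2.2

lemma IsTreeFam.nonempty_of_mem (hF : IsTreeFam F) (hA : A ∈ F) : A.Nonempty :=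
  nonempty_iff_ne_empty.2 fun h => hF.empty_notMem (h ▸ hA)

end IsTreeFam

namespace PhiInvolution

open Finset Function

variable {k : ℕ} {F : Finset (Finset (Fin k))} {A B C : Finset (Fin k)}

def children (F : Finset (Finset (Fin k))) (A : Finset (Fin k)) : Finset (Finset (Fin k)) :=
  F.filter fun B => B ⊂ A ∧ ¬ ∃ C ∈ F, B ⊂ C ∧ C ⊂ A

lemma card_children : (children F A).card = childCount F A := rfl

lemma mem_children : B ∈ children F A ↔ B ∈ F ∧ B ⊂ A ∧ ¬ ∃ C ∈ F, B ⊂ C ∧ C ⊂ A := by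
  simp [children]

def internals (F : Finset (Finset (Fin k))) : Finset (Finset (Fin k)) :=
  F.filter fun A => 1 < A.card

lemma mem_internals : A ∈ internals F ↔ A ∈ F ∧ 1 < A.card := mem_filter

lemma treeEnergy_eq_prod_internals {K : Type*} [CommRing K] (h : ℕ → K) :
    treeEnergy h F = ∏ A ∈ internals F, h (childCount F A) := rfl

lemma exists_mem_children_superset (hB : B ∈ F) (hBA : B ⊂ A) : ∃ C ∈ children F A, B ⊆ C := by
  obtain ⟨M, hBM, hM, hmax⟩ := (F.filter fun C => B ⊆ C ∧ C ⊂ A).exists_le_maximal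
    (mem_filter.2 ⟨hB, subset_refl B, hBA⟩)
  obtain ⟨hMF, -, hMA⟩ := mem_filter.1 hM
  refine ⟨M, mem_children.2 ⟨hMF, hMA, ?_⟩, hBM⟩
  rintro ⟨C, hC, hMC, hCA⟩
  exact hMC.not_subset (hmax (mem_filter.2 ⟨hC, hBM.trans hMC.subset, hCA⟩) hMC.subset)

lemma exists_mem_children_of_ssubset (hB : B ∈ F) (hA : A ∈ F) (hBA : B ⊂ A) :
    ∃ A' ∈ F, B ∈ children F A' := by
  obtain ⟨M, -, hM, hmin⟩ := (F.filter fun C => B ⊂ C).exists_le_minimal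
    (mem_filter.2 ⟨hA, hBA⟩)
  obtain ⟨hMF, hBM⟩ := mem_filter.1 hM
  refine ⟨M, hMF, mem_children.2 ⟨hB, hBM, ?_⟩⟩
  rintro ⟨C, hC, hBC, hCM⟩
  exact hCM.not_subset (hmin (mem_filter.2 ⟨hC, hBC⟩) hCM.subset)

lemma disjoint_of_mem_children (hF : IsTreeFam F) (hB : B ∈ children F A)
    (hC : C ∈ children F A) (hBC : B ≠ C) : Disjoint B C := by
  obtain ⟨hBF, hBA, hB⟩ := mem_children.1 hB
  obtain ⟨hCF, hCA, hC⟩ := mem_children.1 hC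
  rcases hF.laminar B hBF C hCF with h | h | h
  · exact absurd ⟨C, hCF, h.ssubset_of_ne hBC, hCA⟩ hB
  · exact absurd ⟨B, hBF, h.ssubset_of_ne hBC.symm, hBA⟩ hC
  · exact h

lemma exists_mem_children_mem (hF : IsTreeFam F) (hA : A ∈ internals F) {i : Fin k}
    (hi : i ∈ A) : ∃ B ∈ children F A, i ∈ B := by
  have hiA : {i} ⊂ A := by
    refine (singleton_subset_iff.2 hi).ssubset_of_ne fun h => ?_
    simpa [← h] using (mem_internals.1 hA).2
  obtain ⟨B, hB, hiB⟩ := exists_mem_children_superset (hF.singleton_mem i) hiA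
  exact ⟨B, hB, singleton_subset_iff.1 hiB⟩

lemma two_le_childCount (hF : IsTreeFam F) (hA : A ∈ internals F) : 2 ≤ childCount F A := by
  obtain ⟨i, hi⟩ := hF.nonempty_of_mem (mem_internals.1 hA).1
  obtain ⟨B, hB, -⟩ := exists_mem_children_mem hF hA hi
  obtain ⟨j, hjA, hjB⟩ := exists_of_ssubset (mem_children.1 hB).2.1
  obtain ⟨B', hB', hjB'⟩ := exists_mem_children_mem hF hA hjA
  exact one_lt_card.2 ⟨B, hB, B', hB', fun h => hjB (h ▸ hjB')⟩

lemma univ_mem_internals (hF : IsTreeFam F) (hk : 2 ≤ k) : univ ∈ internals F :=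
  mem_internals.2 ⟨hF.univ_mem, by simp; omega⟩

def ofInternals (S : Finset (Finset (Fin k))) : Finset (Finset (Fin k)) :=
  S ∪ univ.image fun i => {i}

lemma mem_ofInternals {S : Finset (Finset (Fin k))} : A ∈ ofInternals S ↔ A ∈ S ∨ ∃ i, {i} = A := by
  simp [ofInternals]

lemma ofInternals_internals (hF : IsTreeFam F) : ofInternals (internals F) = F := by
  ext A
  rw [mem_ofInternals, mem_internals]
  refine ⟨?_, fun hA => ?_⟩
  · rintro (h | ⟨i, rfl⟩)
    exacts [h.1, hF.singleton_mem i]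
  · obtain h | h := lt_or_ge 1 A.card
    · exact Or.inl ⟨hA, h⟩
    · obtain ⟨i, rfl⟩ := card_eq_one.1 (h.antisymm (hF.nonempty_of_mem hA).card_pos)
      exact Or.inr ⟨i, rfl⟩

noncomputable def child (F : Finset (Finset (Fin k))) (A : Finset (Fin k))
    (i : Fin (childCount F A)) : Finset (Fin k) :=
  ((children F A).equivFin.symm i).1

lemma child_mem_children (i : Fin (childCount F A)) : child F A i ∈ children F A :=
  ((children F A).equivFin.symm i).2

lemma child_mem (i : Fin (childCount F A)) : child F A i ∈ F :=
  (mem_children.1 (child_mem_children i)).1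

lemma child_ssubset (i : Fin (childCount F A)) : child F A i ⊂ A :=
  (mem_children.1 (child_mem_children i)).2.1

lemma child_injective : Injective (child F A) := fun _ _ h =>
  (children F A).equivFin.symm.injective (Subtype.ext h)

lemma exists_child_eq (hB : B ∈ children F A) : ∃ i, child F A i = B :=
  ⟨(children F A).equivFin ⟨B, hB⟩, by simp [child]⟩

lemma child_nonempty (hF : IsTreeFam F) (i : Fin (childCount F A)) : (child F A i).Nonempty :=
  hF.nonempty_of_mem (child_mem i)

lemma pairwise_disjoint_child (hF : IsTreeFam F) :
    Pairwise (Disjoint on child F A) := fun _ _ hij =>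
  disjoint_of_mem_children hF (child_mem_children _) (child_mem_children _) (child_injective.ne hij)

lemma exists_subset_child_of_ssubset (hB : B ∈ F) (hBA : B ⊂ A) : ∃ i, B ⊆ child F A i := by
  obtain ⟨C, hC, hBC⟩ := exists_mem_children_superset hB hBA
  obtain ⟨i, rfl⟩ := exists_child_eq hC
  exact ⟨i, hBC⟩

lemma exists_mem_child (hF : IsTreeFam F) (hA : A ∈ internals F) {x : Fin k} (hx : x ∈ A) :
    ∃ i, x ∈ child F A i := by
  obtain ⟨C, hC, hxC⟩ := exists_mem_children_mem hF hA hx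
  obtain ⟨i, rfl⟩ := exists_child_eq hC
  exact ⟨i, hxC⟩

noncomputable def expand (F : Finset (Finset (Fin k))) (A : Finset (Fin k))
    (I : Finset (Fin (childCount F A))) : Finset (Fin k) :=
  I.biUnion (child F A)

variable {I J : Finset (Fin (childCount F A))}

lemma mem_expand {x : Fin k} : x ∈ expand F A I ↔ ∃ i ∈ I, x ∈ child F A i := mem_biUnion

lemma expand_singleton (i : Fin (childCount F A)) : expand F A {i} = child F A i :=
  singleton_biUnion

lemma expand_subset (I : Finset (Fin (childCount F A))) : expand F A I ⊆ A :=
  biUnion_subset.2 fun i _ => (child_ssubset i).subset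

lemma expand_univ (hF : IsTreeFam F) (hA : A ∈ internals F) : expand F A univ = A := by
  refine (expand_subset _).antisymm fun x hx => ?_
  obtain ⟨i, hi⟩ := exists_mem_child hF hA hx
  exact mem_expand.2 ⟨i, mem_univ i, hi⟩

lemma expand_subset_expand_iff (hF : IsTreeFam F) : expand F A I ⊆ expand F A J ↔ I ⊆ J :=
  biUnion_subset_biUnion_iff (child_nonempty hF) (pairwise_disjoint_child hF)

lemma expand_ssubset_expand_iff (hF : IsTreeFam F) : expand F A I ⊂ expand F A J ↔ I ⊂ J :=
  biUnion_ssubset_biUnion_iff (child_nonempty hF) (pairwise_disjoint_child hF)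

lemma expand_injective (hF : IsTreeFam F) : Injective (expand F A) :=
  biUnion_left_injective (child_nonempty hF) (pairwise_disjoint_child hF)

lemma disjoint_expand_iff (hF : IsTreeFam F) :
    Disjoint (expand F A I) (expand F A J) ↔ Disjoint I J :=
  disjoint_biUnion_biUnion_iff (child_nonempty hF) (pairwise_disjoint_child hF)

lemma expand_nonempty_iff (hF : IsTreeFam F) : (expand F A I).Nonempty ↔ I.Nonempty := by
  rw [expand, biUnion_nonempty]
  exact ⟨fun ⟨i, hi, _⟩ => ⟨i, hi⟩, fun ⟨i, hi⟩ => ⟨i, hi, child_nonempty hF i⟩⟩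

lemma one_lt_card_expand (hF : IsTreeFam F) (hI : 1 < I.card) : 1 < (expand F A I).card :=
  hI.trans_le <| card_le_card_biUnion (fun _ _ _ _ hij => pairwise_disjoint_child hF hij)
    fun i _ => child_nonempty hF i

lemma expand_subset_child_iff (hF : IsTreeFam F) {i : Fin (childCount F A)} :
    expand F A I ⊆ child F A i ↔ I ⊆ {i} := by
  rw [← expand_singleton, expand_subset_expand_iff hF]

lemma not_ssubset_child_of_expand_subset (hF : IsTreeFam F) (hI : I.Nonempty)
    (hIC : expand F A I ⊆ C) (i : Fin (childCount F A)) : ¬ C ⊂ child F A i := fun hCi => by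
  rw [← expand_singleton] at hCi
  have := (expand_ssubset_expand_iff hF).1 (hIC.trans_ssubset hCi)
  exact hI.ne_empty (ssubset_singleton_iff.1 this)

lemma expand_filter_child_subset_eq (hF : IsTreeFam F) (hA : A ∈ internals F) (hCA : C ⊆ A)
    (hC : ∀ i, child F A i ⊆ C ∨ Disjoint (child F A i) C) :
    expand F A (univ.filter fun i => child F A i ⊆ C) = C := by
  refine subset_antisymm (biUnion_subset.2 fun i hi => (mem_filter.1 hi).2) fun x hx => ?_
  obtain ⟨i, hxi⟩ := exists_mem_child hF hA (hCA hx)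
  have hiC : child F A i ⊆ C := (hC i).resolve_right (not_disjoint_iff.2 ⟨x, hxi, hx⟩)
  exact mem_expand.2 ⟨i, mem_filter.2 ⟨mem_univ i, hiC⟩, hxi⟩

lemma expand_subset_or_disjoint_of_ssubset (hF : IsTreeFam F) {A' : Finset (Fin k)} (hA : A ∈ F)
    (hAA' : A ⊂ A') (I : Finset (Fin (childCount F A))) (J : Finset (Fin (childCount F A'))) :
    expand F A I ⊆ expand F A' J ∨ Disjoint (expand F A I) (expand F A' J) := by
  obtain ⟨i, hAi⟩ := exists_subset_child_of_ssubset hA hAA'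
  have hIi : expand F A I ⊆ expand F A' {i} := (expand_subset I).trans (expand_singleton i ▸ hAi)
  by_cases hiJ : i ∈ J
  · exact Or.inl (hIi.trans ((expand_subset_expand_iff hF).2 (singleton_subset_iff.2 hiJ)))
  · exact Or.inr (((disjoint_expand_iff hF).2 (disjoint_singleton_left.2 hiJ)).mono_left hIi)

/-- Substitute the tree `p A` (on the children of `A`) into each internal vertex `A` of `F`. -/
noncomputable def graft (F : Finset (Finset (Fin k)))
    (p : ∀ A ∈ internals F, Finset (Finset (Fin (childCount F A)))) : Finset (Finset (Fin k)) :=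
  (internals F).attach.biUnion fun A => (p A.1 A.2).image (expand F A.1)

variable {p : ∀ A ∈ internals F, Finset (Finset (Fin (childCount F A)))}

lemma mem_graft :
    C ∈ graft F p ↔ ∃ A, ∃ hA : A ∈ internals F, ∃ I ∈ p A hA, expand F A I = C := by
  simp [graft]

lemma expand_mem_graft (hA : A ∈ internals F) (hI : I ∈ p A hA) : expand F A I ∈ graft F p :=
  mem_graft.2 ⟨A, hA, I, hI, rfl⟩

lemma child_mem_graft (hp : ∀ A hA, IsTreeFam (p A hA)) (hA : A ∈ internals F)
    (i : Fin (childCount F A)) : child F A i ∈ graft F p :=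
  expand_singleton i ▸ expand_mem_graft hA ((hp A hA).singleton_mem i)

lemma nonempty_of_mem_graft (hF : IsTreeFam F) (hp : ∀ A hA, IsTreeFam (p A hA))
    (hC : C ∈ graft F p) : C.Nonempty := by
  obtain ⟨A, hA, I, hI, rfl⟩ := mem_graft.1 hC
  exact (expand_nonempty_iff hF).2 ((hp A hA).nonempty_of_mem hI)

lemma exists_expand_eq_of_mem_graft (hF : IsTreeFam F) (hp : ∀ A hA, IsTreeFam (p A hA))
    (hA : A ∈ internals F) (hC : C ∈ graft F p) (hCA : C ⊆ A)
    (hCchild : ∀ i, ¬ C ⊂ child F A i) : ∃ I ∈ p A hA, expand F A I = C := by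
  have hCne := nonempty_of_mem_graft hF hp hC
  obtain ⟨A', hA', I', hI', rfl⟩ := mem_graft.1 hC
  have hAF := (mem_internals.1 hA).1
  have hA'F := (mem_internals.1 hA').1
  rcases eq_or_ne A A' with rfl | hne
  · exact ⟨I', hI', rfl⟩
  rcases hF.laminar A hAF A' hA'F with h | h | h
  · -- `A` lies in one child of `A'`; the piece is a union of children of `A'` inside `A`,
    -- so it is that child, and hence equals `A`
    obtain ⟨i, hAi⟩ := exists_subset_child_of_ssubset hAF (h.ssubset_of_ne hne)
    have hI'i : I' = {i} := ((subset_singleton_iff.1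
      ((expand_subset_child_iff hF).1 (hCA.trans hAi))).resolve_left
      ((hp A' hA').nonempty_of_mem hI').ne_empty)
    refine ⟨univ, (hp A hA).univ_mem, ?_⟩
    rw [expand_univ hF hA]
    exact subset_antisymm (by rwa [hI'i, expand_singleton]) hCA
  · obtain ⟨i, hA'i⟩ := exists_subset_child_of_ssubset hA'F (h.ssubset_of_ne hne.symm)
    refine ⟨{i}, (hp A hA).singleton_mem i, ?_⟩
    rw [expand_singleton]
    exact (((expand_subset I').trans hA'i).eq_of_not_ssubset (hCchild i)).symm
  · obtain ⟨x, hx⟩ := hCne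
    exact absurd (expand_subset I' hx) (disjoint_left.1 h (hCA hx))

lemma laminar_graft (hF : IsTreeFam F) (hp : ∀ A hA, IsTreeFam (p A hA)) :
    ∀ C ∈ graft F p, ∀ D ∈ graft F p, C ⊆ D ∨ D ⊆ C ∨ Disjoint C D := by
  intro C hC D hD
  obtain ⟨A, hA, I, hI, rfl⟩ := mem_graft.1 hC
  obtain ⟨A', hA', J, hJ, rfl⟩ := mem_graft.1 hD
  rcases eq_or_ne A A' with rfl | hne
  · exact ((hp A hA).laminar I hI J hJ).imp (expand_subset_expand_iff hF).2
      (Or.imp (expand_subset_expand_iff hF).2 (disjoint_expand_iff hF).2)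
  rcases hF.laminar A (mem_internals.1 hA).1 A' (mem_internals.1 hA').1 with h | h | h
  · exact (expand_subset_or_disjoint_of_ssubset hF (mem_internals.1 hA).1
      (h.ssubset_of_ne hne) I J).imp_right Or.inr
  · rcases expand_subset_or_disjoint_of_ssubset hF (mem_internals.1 hA').1
      (h.ssubset_of_ne hne.symm) J I with h' | h'
    exacts [Or.inr (Or.inl h'), Or.inr (Or.inr h'.symm)]
  · exact Or.inr (Or.inr (h.mono (expand_subset I) (expand_subset J)))

lemma isTreeFam_graft (hF : IsTreeFam F) (hp : ∀ A hA, IsTreeFam (p A hA)) (hk : 2 ≤ k) :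
    IsTreeFam (graft F p) := by
  refine ⟨laminar_graft hF hp, ?_, fun i => ?_, fun h => ?_⟩
  · have hU := univ_mem_internals hF hk
    exact expand_univ hF hU ▸ expand_mem_graft hU (hp univ hU).univ_mem
  · have : Nontrivial (Fin k) := Fin.nontrivial_iff_two_le.2 hk
    have hi : {i} ⊂ univ := ssubset_univ_iff.2 (singleton_ne_univ i)
    obtain ⟨A, hA, hiA⟩ := exists_mem_children_of_ssubset (hF.singleton_mem i) hF.univ_mem hi
    have hAint : A ∈ internals F := mem_internals.2
      ⟨hA, by simpa using card_lt_card (mem_children.1 hiA).2.1⟩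
    obtain ⟨j, hj⟩ := exists_child_eq hiA
    exact hj ▸ child_mem_graft hp hAint j
  · exact not_nonempty_empty (nonempty_of_mem_graft hF hp h)

lemma children_graft (hF : IsTreeFam F) (hp : ∀ A hA, IsTreeFam (p A hA))
    (hA : A ∈ internals F) (hI : I ∈ internals (p A hA)) :
    children (graft F p) (expand F A I) = (children (p A hA) I).image (expand F A) := by
  have hIcard := (mem_internals.1 hI).2
  ext D
  rw [mem_image]
  constructor
  · intro hD
    obtain ⟨hDG, hDI, hDmin⟩ := mem_children.1 hD
    -- a child of `A` strictly containing `D` would lie strictly between `D` and `expand F A I`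
    have hDchild : ∀ i, ¬ D ⊂ child F A i := fun i hDi => by
      obtain ⟨x, hx⟩ := nonempty_of_mem_graft hF hp hDG
      have hiI : i ∈ I := by
        by_contra hiI
        have := (disjoint_expand_iff hF).2 (disjoint_singleton_left.2 hiI)
        rw [expand_singleton] at this
        exact disjoint_left.1 this (hDi.subset hx) (hDI.subset hx)
      have hiI' : {i} ⊂ I := (singleton_subset_iff.2 hiI).ssubset_of_ne fun h => by
        rw [← h, card_singleton] at hIcard
        exact lt_irrefl 1 hIcard
      exact hDmin ⟨child F A i, child_mem_graft hp hA i, hDi,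
        expand_singleton i ▸ (expand_ssubset_expand_iff hF).2 hiI'⟩
    obtain ⟨J, hJ, rfl⟩ := exists_expand_eq_of_mem_graft hF hp hA hDG
      (hDI.subset.trans (expand_subset I)) hDchild
    refine ⟨J, mem_children.2 ⟨hJ, (expand_ssubset_expand_iff hF).1 hDI, ?_⟩, rfl⟩
    rintro ⟨J', hJ', hJJ', hJ'I⟩
    exact hDmin ⟨expand F A J', expand_mem_graft hA hJ', (expand_ssubset_expand_iff hF).2 hJJ',
      (expand_ssubset_expand_iff hF).2 hJ'I⟩
  · rintro ⟨J, hJ, rfl⟩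
    obtain ⟨hJp, hJI, hJmin⟩ := mem_children.1 hJ
    refine mem_children.2 ⟨expand_mem_graft hA hJp, (expand_ssubset_expand_iff hF).2 hJI, ?_⟩
    rintro ⟨E, hE, hJE, hEI⟩
    obtain ⟨J', hJ', rfl⟩ := exists_expand_eq_of_mem_graft hF hp hA hE
      (hEI.subset.trans (expand_subset I))
      (not_ssubset_child_of_expand_subset hF ((hp A hA).nonempty_of_mem hJp) hJE.subset)
    exact hJmin ⟨J', hJ', (expand_ssubset_expand_iff hF).1 hJE,
      (expand_ssubset_expand_iff hF).1 hEI⟩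

lemma childCount_graft (hF : IsTreeFam F) (hp : ∀ A hA, IsTreeFam (p A hA))
    (hA : A ∈ internals F) (hI : I ∈ internals (p A hA)) :
    childCount (graft F p) (expand F A I) = childCount (p A hA) I := by
  rw [← card_children, ← card_children, children_graft hF hp hA hI,
    card_image_of_injective _ (expand_injective hF)]

lemma internals_graft (hF : IsTreeFam F) (hp : ∀ A hA, IsTreeFam (p A hA)) :
    internals (graft F p) =
      (internals F).attach.biUnion fun A => (internals (p A.1 A.2)).image (expand F A.1) := by
  ext C
  simp only [mem_internals (F := graft F p), mem_biUnion, mem_attach, true_and, mem_image,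
    Subtype.exists]
  constructor
  · rintro ⟨hC, hCcard⟩
    obtain ⟨A, hA, I, hI, rfl⟩ := mem_graft.1 hC
    obtain hIcard | hIcard := lt_or_ge 1 I.card
    · exact ⟨A, hA, I, mem_internals.2 ⟨hI, hIcard⟩, rfl⟩
    -- a single child of `A` is also the root of the tree grafted at that child
    obtain ⟨i, rfl⟩ := card_eq_one.1 (hIcard.antisymm ((hp A hA).nonempty_of_mem hI).card_pos)
    rw [expand_singleton] at hCcard ⊢
    have hi : child F A i ∈ internals F := mem_internals.2 ⟨child_mem i, hCcard⟩
    refine ⟨_, hi, univ, mem_internals.2 ⟨(hp _ hi).univ_mem, ?_⟩, expand_univ hF hi⟩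
    rw [card_univ, Fintype.card_fin]
    exact two_le_childCount hF hi
  · rintro ⟨A, hA, I, hI, rfl⟩
    exact ⟨expand_mem_graft hA (mem_internals.1 hI).1, one_lt_card_expand hF (mem_internals.1 hI).2⟩

lemma internals_subset_internals_graft (hF : IsTreeFam F) (hp : ∀ A hA, IsTreeFam (p A hA)) :
    internals F ⊆ internals (graft F p) := fun A hA => by
  refine mem_internals.2 ⟨?_, (mem_internals.1 hA).2⟩
  rw [← expand_univ hF hA]
  exact expand_mem_graft hA (hp A hA).univ_mem

lemma expand_ne_expand_of_ne (hF : IsTreeFam F) {A' : Finset (Fin k)} (hA : A ∈ F)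
    (hA' : A' ∈ F) (hne : A ≠ A') {J : Finset (Fin (childCount F A'))} (hI : 1 < I.card)
    (hJ : 1 < J.card) : expand F A I ≠ expand F A' J := by
  wlog h : A ⊆ A' generalizing A A' I J
  · rcases hF.laminar A hA A' hA' with h' | h' | h'
    · exact absurd h' h
    · exact (this hA' hA hne.symm hJ hI h').symm
    · intro heq
      obtain ⟨x, hx⟩ := (expand_nonempty_iff hF).2 (card_pos.1 (one_pos.trans hI))
      exact disjoint_left.1 h' (expand_subset I hx) (expand_subset J (heq ▸ hx))
  intro heq
  obtain ⟨i, hAi⟩ := exists_subset_child_of_ssubset hA (h.ssubset_of_ne hne)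
  have hJi := (expand_subset_child_iff hF).1 (heq ▸ (expand_subset I).trans hAi)
  exact (card_le_card hJi).not_gt (by rwa [card_singleton])

lemma treeEnergy_graft {K : Type*} [CommRing K] (h : ℕ → K) (hF : IsTreeFam F)
    (hp : ∀ A hA, IsTreeFam (p A hA)) :
    treeEnergy h (graft F p) = ∏ A ∈ (internals F).attach, treeEnergy h (p A.1 A.2) := by
  rw [treeEnergy_eq_prod_internals, internals_graft hF hp, prod_biUnion]
  · refine prod_congr rfl fun A _ => ?_
    rw [prod_image fun I _ J _ h => expand_injective hF h, treeEnergy_eq_prod_internals]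
    exact prod_congr rfl fun I hI => by rw [childCount_graft hF hp A.2 hI]
  · intro A _ A' _ hAA'
    refine disjoint_left.2 fun C hC hC' => ?_
    obtain ⟨I, hI, rfl⟩ := mem_image.1 hC
    obtain ⟨J, hJ, hJI⟩ := mem_image.1 hC'
    exact expand_ne_expand_of_ne hF (mem_internals.1 A.2).1 (mem_internals.1 A'.2).1
      (Subtype.coe_ne_coe.2 hAA') (mem_internals.1 hI).2 (mem_internals.1 hJ).2 hJI.symm

noncomputable def localTree (G F : Finset (Finset (Fin k))) (A : Finset (Fin k)) :
    Finset (Finset (Fin (childCount F A))) :=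
  univ.filter fun I => expand F A I ∈ G

lemma mem_localTree {G : Finset (Finset (Fin k))} : I ∈ localTree G F A ↔ expand F A I ∈ G := by
  simp [localTree]

lemma localTree_graft (hF : IsTreeFam F) (hp : ∀ A hA, IsTreeFam (p A hA))
    (hA : A ∈ internals F) : localTree (graft F p) F A = p A hA := by
  ext I
  refine ⟨fun hI => ?_, fun hI => mem_localTree.2 (expand_mem_graft hA hI)⟩
  rw [mem_localTree] at hI
  have hIne := (expand_nonempty_iff hF).1 (nonempty_of_mem_graft hF hp hI)
  obtain ⟨J, hJ, hJI⟩ := exists_expand_eq_of_mem_graft hF hp hA hI (expand_subset I)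
    (not_ssubset_child_of_expand_subset hF hIne subset_rfl)
  exact expand_injective hF hJI ▸ hJ

lemma isTreeFam_localTree {G : Finset (Finset (Fin k))} (hG : IsTreeFam G) (hF : IsTreeFam F)
    (hFG : F ⊆ G) (hA : A ∈ internals F) : IsTreeFam (localTree G F A) := by
  refine ⟨fun I hI J hJ => ?_, ?_, fun i => ?_, fun h => ?_⟩
  · rw [mem_localTree] at hI hJ
    exact (hG.laminar _ hI _ hJ).imp (expand_subset_expand_iff hF).1
      (Or.imp (expand_subset_expand_iff hF).1 (disjoint_expand_iff hF).1)
  · rw [mem_localTree, expand_univ hF hA]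
    exact hFG (mem_internals.1 hA).1
  · exact mem_localTree.2 (expand_singleton i ▸ hFG (child_mem i))
  · exact hG.empty_notMem (mem_localTree.1 h)

variable {S : Finset (Finset (Fin k))}

lemma internals_ofInternals (hS : ∀ A ∈ S, 1 < A.card) : internals (ofInternals S) = S := by
  ext A
  rw [mem_internals, mem_ofInternals]
  refine ⟨?_, fun hA => ⟨Or.inl hA, hS A hA⟩⟩
  rintro ⟨hA | ⟨i, rfl⟩, hcard⟩
  exacts [hA, absurd hcard (by simp)]

lemma isTreeFam_ofInternals (hlam : ∀ A ∈ S, ∀ B ∈ S, A ⊆ B ∨ B ⊆ A ∨ Disjoint A B)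
    (hU : univ ∈ S) (hS : ∀ A ∈ S, 1 < A.card) : IsTreeFam (ofInternals S) := by
  have hsing (i : Fin k) (A : Finset (Fin k)) : {i} ⊆ A ∨ Disjoint {i} A :=
    (em (i ∈ A)).imp singleton_subset_iff.2 disjoint_singleton_left.2
  refine ⟨fun A hA B hB => ?_, mem_ofInternals.2 (Or.inl hU),
    fun i => mem_ofInternals.2 (Or.inr ⟨i, rfl⟩), fun h => ?_⟩
  · rcases mem_ofInternals.1 hA with hA | ⟨i, rfl⟩ <;>
      rcases mem_ofInternals.1 hB with hB | ⟨j, rfl⟩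
    · exact hlam A hA B hB
    · exact (hsing j A).elim (Or.inr ∘ Or.inl) fun h => Or.inr (Or.inr h.symm)
    · exact (hsing i B).imp_right Or.inr
    · exact (hsing i {j}).imp_right Or.inr
  · rcases mem_ofInternals.1 h with h | ⟨i, hi⟩
    exacts [absurd (hS ∅ h) (by simp), singleton_ne_empty i hi]

lemma isTreeFam_ofInternals_of_subset {G : Finset (Finset (Fin k))} (hG : IsTreeFam G)
    (hS : S ⊆ internals G) (hU : univ ∈ S) : IsTreeFam (ofInternals S) :=
  isTreeFam_ofInternals (fun A hA B hB => hG.laminar A (mem_internals.1 (hS hA)).1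
    B (mem_internals.1 (hS hB)).1) hU fun _ hA => (mem_internals.1 (hS hA)).2

lemma ofInternals_subset {G : Finset (Finset (Fin k))} (hG : IsTreeFam G)
    (hS : S ⊆ internals G) : ofInternals S ⊆ G := by
  rw [← ofInternals_internals hG]
  exact union_subset_union_left hS

lemma graft_localTree {G : Finset (Finset (Fin k))} (hG : IsTreeFam G) (hS : S ⊆ internals G)
    (hU : univ ∈ S) :
    graft (ofInternals S) (fun A _ => localTree G (ofInternals S) A) = G := by
  have hF := isTreeFam_ofInternals_of_subset hG hS hU
  have hint : internals (ofInternals S) = S :=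
    internals_ofInternals fun A hA => (mem_internals.1 (hS hA)).2
  have hFG := ofInternals_subset hG hS
  refine subset_antisymm (fun C hC => ?_) fun C hC => ?_
  · obtain ⟨A, -, I, hI, rfl⟩ := mem_graft.1 hC
    exact mem_localTree.1 hI
  -- `C` is a union of children of the smallest vertex of `S` containing it
  obtain ⟨M, -, hMS, hmin⟩ := (S.filter fun A => C ⊆ A).exists_le_minimal
    (mem_filter.2 ⟨hU, subset_univ C⟩)
  obtain ⟨hM, hCM⟩ := mem_filter.1 hMS
  have hMint : M ∈ internals (ofInternals S) := by rw [hint]; exact hM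
  have hchild (i : Fin (childCount (ofInternals S) M)) :
      child (ofInternals S) M i ⊆ C ∨ Disjoint (child (ofInternals S) M i) C := by
    rcases hG.laminar _ (hFG (child_mem i)) C hC with h | h | h
    · exact Or.inl h
    · rcases mem_ofInternals.1 (child_mem i) with hiS | ⟨x, hx⟩
      · exact absurd (hmin (mem_filter.2 ⟨hiS, h⟩) (child_ssubset i).subset)
          (child_ssubset i).not_subset
      · rw [← hx] at h ⊢
        exact Or.inl ((subset_singleton_iff.1 h).resolve_left (hG.nonempty_of_mem hC).ne_empty).ge
    · exact Or.inr h
  have hCexp := expand_filter_child_subset_eq hF hMint hCM hchild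
  exact mem_graft.2 ⟨M, hMint, _, mem_localTree.2 (by rwa [hCexp]), hCexp⟩

noncomputable def treeFams (k : ℕ) : Finset (Finset (Finset (Fin k))) :=
  univ.filter IsTreeFam

lemma mem_treeFams : F ∈ treeFams k ↔ IsTreeFam F := by
  simp [treeFams]

variable {K : Type*} [CommRing K]

lemma Phi_eq_neg_sum (h : ℕ → K) (k : ℕ) : Phi h k = -∑ F ∈ treeFams k, treeEnergy h F := rfl

lemma treeEnergy_Phi (h : ℕ → K) (F : Finset (Finset (Fin k))) :
    treeEnergy (Phi h) F = (-1) ^ (internals F).card *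
      ∑ p ∈ (internals F).pi (fun A => treeFams (childCount F A)),
        ∏ A ∈ (internals F).attach, treeEnergy h (p A.1 A.2) := by
  calc treeEnergy (Phi h) F
      = ∏ A ∈ internals F, (-1) * ∑ G ∈ treeFams (childCount F A), treeEnergy h G :=
        prod_congr rfl fun A _ => by rw [Phi_eq_neg_sum, neg_one_mul]
    _ = _ := by rw [prod_mul_distrib, prod_const, prod_sum]

/-- The bijection is `(F, p) ↦ (graft F p, internals F)`, with inverse
`(G, S) ↦ (ofInternals S, localTree G (ofInternals S))`. -/
lemma sum_treeEnergy_Phi (h : ℕ → K) (hk : 2 ≤ k) :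
    ∑ F ∈ treeFams k, treeEnergy (Phi h) F =
      ∑ G ∈ treeFams k, ∑ S ∈ (internals G).powerset with univ ∈ S,
        (-1) ^ S.card * treeEnergy h G := by
  simp_rw [treeEnergy_Phi, mul_sum]
  rw [sum_sigma', sum_sigma']
  refine sum_bij (fun x _ => ⟨graft x.1 x.2, internals x.1⟩) ?_ ?_ ?_ ?_
  · rintro ⟨F, p⟩ hx
    simp only [mem_sigma, mem_pi, mem_treeFams, mem_filter, mem_powerset] at hx ⊢
    exact ⟨isTreeFam_graft hx.1 hx.2 hk, internals_subset_internals_graft hx.1 hx.2,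
      univ_mem_internals hx.1 hk⟩
  · rintro ⟨F, p⟩ hx ⟨F', p'⟩ hx' hxx'
    simp only [mem_sigma, mem_pi, mem_treeFams] at hx hx'
    obtain ⟨hgraft, hint⟩ := Sigma.mk.inj_iff.1 hxx'
    obtain rfl : F = F' := by
      rw [← ofInternals_internals hx.1, ← ofInternals_internals hx'.1, eq_of_heq hint]
    obtain rfl : p = p' := funext₂ fun A hA => by
      rw [← localTree_graft hx.1 hx.2 hA, hgraft, localTree_graft hx'.1 hx'.2 hA]
    rfl
  · rintro ⟨G, S⟩ hy
    simp only [mem_sigma, mem_treeFams, mem_filter, mem_powerset] at hy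
    obtain ⟨hG, hS, hU⟩ := hy
    have hF := isTreeFam_ofInternals_of_subset hG hS hU
    have hint : internals (ofInternals S) = S :=
      internals_ofInternals fun _ hA => (mem_internals.1 (hS hA)).2
    refine ⟨⟨ofInternals S, fun A _ => localTree G (ofInternals S) A⟩, ?_, ?_⟩
    · simp only [mem_sigma, mem_pi, mem_treeFams]
      exact ⟨hF, fun A hA => isTreeFam_localTree hG hF (ofInternals_subset hG hS) hA⟩
    · simp only [graft_localTree hG hS hU, hint]
  · rintro ⟨F, p⟩ hx
    simp only [mem_sigma, mem_pi, mem_treeFams] at hx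
    rw [treeEnergy_graft h hx.1 hx.2]

lemma childCount_corolla (hk : 2 ≤ k) :
    childCount (ofInternals {univ}) (univ : Finset (Fin k)) = k := by
  have : Nontrivial (Fin k) := Fin.nontrivial_iff_two_le.2 hk
  have hchildren : children (ofInternals {univ}) univ = univ.image fun i : Fin k => {i} := by
    ext B
    simp only [mem_children, mem_ofInternals, mem_singleton, mem_image, mem_univ, true_and]
    refine ⟨fun ⟨hB, hBu, _⟩ => hB.resolve_left hBu.ne, ?_⟩
    rintro ⟨i, rfl⟩
    refine ⟨Or.inr ⟨i, rfl⟩, ssubset_univ_iff.2 (singleton_ne_univ i), ?_⟩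
    rintro ⟨C, hC | ⟨j, rfl⟩, hiC, hCu⟩
    · exact hCu.ne hC
    · simpa using card_lt_card hiC
  rw [← card_children, hchildren, card_image_of_injective _ singleton_injective, card_univ,
    Fintype.card_fin]

lemma filter_treeFams_internals_eq_singleton_univ (hk : 2 ≤ k) :
    (treeFams k).filter (fun G => internals G = {univ}) = {ofInternals {univ}} := by
  have hint : internals (ofInternals {univ}) = {(univ : Finset (Fin k))} :=
    internals_ofInternals (by simp; omega)
  ext G
  rw [mem_filter, mem_singleton, mem_treeFams]
  refine ⟨fun ⟨hG, hGint⟩ => by rw [← hGint, ofInternals_internals hG], ?_⟩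
  rintro rfl
  exact ⟨isTreeFam_ofInternals (by simp) (mem_singleton_self _) (by simp; omega), hint⟩

lemma sum_neg_one_pow_mul_treeEnergy (h : ℕ → K) (hk : 2 ≤ k) :
    ∑ G ∈ treeFams k, ∑ S ∈ (internals G).powerset with univ ∈ S,
      (-1) ^ S.card * treeEnergy h G = -h k := by
  rw [sum_congr rfl fun G hG => by rw [← sum_mul,
    sum_powerset_filter_mem_neg_one_pow (univ_mem_internals (mem_treeFams.1 hG) hk)]]
  simp_rw [ite_mul, neg_one_mul, zero_mul]
  rw [← sum_filter, filter_treeFams_internals_eq_singleton_univ hk, sum_singleton,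
    treeEnergy_eq_prod_internals, internals_ofInternals (by simp; omega), prod_singleton,
    childCount_corolla hk]

end PhiInvolution

/-- `Φ` is an involution on sequences `(hₖ)_{k ≥ 2}`. -/
theorem Phi_involution {K : Type*} [CommRing K] (h : ℕ → K) :
    ∀ k : ℕ, 2 ≤ k → Phi (Phi h) k = h k := by
  intro k hk
  rw [PhiInvolution.Phi_eq_neg_sum, PhiInvolution.sum_treeEnergy_Phi h hk,
    PhiInvolution.sum_neg_one_pow_mul_treeEnergy h hk, neg_neg]
end

section
/- Let N ≥ 1 and let H : ℂ^N → ℂ^N be a polynomial mapping each of whose components is homogeneous of degree δ ≥ 2, and set F = I − H (i.e., F(X) = X − H(X)). If the Jacobian determinant det(J(F)) is identically equal to 1 on ℂ^N, then the Jacobian matrix J(H) is nilpotent at every point; in fact Tr(J(H)(X)^k) = 0 for all X ∈ ℂ^N and all k ≥ 1. -/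
open scoped Classical

/-- The Jacobian matrix of a polynomial mapping `H : ℂ^N → ℂ^N`, evaluated at a point. -/
noncomputable def jacobianAt {N : ℕ} (H : Fin N → MvPolynomial (Fin N) ℂ)
    (X : Fin N → ℂ) : Matrix (Fin N) (Fin N) ℂ :=
  Matrix.of fun i j => MvPolynomial.eval X (MvPolynomial.pderiv j (H i))

/-!
Under the dilation `X ↦ tX` the Jacobian of a map homogeneous of degree `δ` scales by
`t ^ (δ - 1)`, so `det (1 - s • J(H)(X)) = 1` for every `s ∈ ℂ` (take `t` a `(δ - 1)`-th root
of `s`). Hence `det (z - J(H)(X)) = z ^ N` for all `z ≠ 0`, the characteristic polynomial of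
`J(H)(X)` is `X ^ N`, and Cayley–Hamilton makes `J(H)(X)` nilpotent.
-/

theorem MvPolynomial.IsHomogeneous.eval_smul {R σ : Type*} [CommSemiring R]
    {φ : MvPolynomial σ R} {n : ℕ} (h : φ.IsHomogeneous n) (t : R) (x : σ → R) :
    eval (t • x) φ = t ^ n * eval x φ := by
  rw [eval_eq, eval_eq, Finset.mul_sum]
  refine Finset.sum_congr rfl fun d hd => ?_
  simp only [Pi.smul_apply, smul_eq_mul, mul_pow, Finset.prod_mul_distrib,
    Finset.prod_pow_eq_pow_sum, ← h.degree_eq_sum_deg_support hd]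
  ring

theorem Matrix.isNilpotent_of_forall_det_one_sub_smul_eq_one {K n : Type*} [Field K] [Infinite K]
    [Fintype n] [DecidableEq n] {M : Matrix n n K} (h : ∀ s : K, (1 - s • M).det = 1) :
    IsNilpotent M := by
  have hcharpoly : M.charpoly = Polynomial.X ^ Fintype.card n := by
    refine Polynomial.eq_of_infinite_eval_eq _ _ ((Set.finite_singleton 0).infinite_compl.mono ?_)
    intro z (hz : z ≠ 0)
    have hfactor : Matrix.scalar n z - M = z • (1 - z⁻¹ • M) := by
      rw [smul_sub, smul_smul, mul_inv_cancel₀ hz, one_smul, smul_one_eq_diagonal]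
      rfl
    rw [Set.mem_ofPred_eq, eval_charpoly, hfactor, det_smul, h, mul_one, Polynomial.eval_X_pow]
  refine ⟨Fintype.card n, ?_⟩
  simpa [hcharpoly] using M.aeval_self_charpoly

section Jacobian

open MvPolynomial

variable {N : ℕ}

theorem jacobianAt_sub (F G : Fin N → MvPolynomial (Fin N) ℂ) (x : Fin N → ℂ) :
    jacobianAt (fun i => F i - G i) x = jacobianAt F x - jacobianAt G x := by
  ext i j
  simp [jacobianAt]

theorem jacobianAt_X (x : Fin N → ℂ) : jacobianAt (fun i => X i) x = 1 := by
  ext i j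
  simp [jacobianAt, pderiv_X, Pi.single_apply, Matrix.one_apply]

theorem jacobianAt_smul_of_isHomogeneous {δ : ℕ} {H : Fin N → MvPolynomial (Fin N) ℂ}
    (hH : ∀ i, (H i).IsHomogeneous δ) (t : ℂ) (x : Fin N → ℂ) :
    jacobianAt H (t • x) = t ^ (δ - 1) • jacobianAt H x := by
  ext i j
  simp [jacobianAt, ((hH i).pderiv).eval_smul]

end Jacobian

theorem homogeneous_constant_jacobian_nilpotent_general {N : ℕ} (δ : ℕ) (hδ : 2 ≤ δ)
    (H : Fin N → MvPolynomial (Fin N) ℂ)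
    (hhom : ∀ i, (H i).IsHomogeneous δ)
    (hdet : ∀ X : Fin N → ℂ,
      (jacobianAt (fun i => MvPolynomial.X i - H i) X).det = 1) :
    ∀ X : Fin N → ℂ,
      IsNilpotent (jacobianAt H X) ∧
        ∀ k : ℕ, 1 ≤ k → Matrix.trace ((jacobianAt H X) ^ k) = 0 := by
  intro x
  have hnil : IsNilpotent (jacobianAt H x) := by
    refine Matrix.isNilpotent_of_forall_det_one_sub_smul_eq_one fun s => ?_
    obtain ⟨t, rfl⟩ := IsAlgClosed.exists_pow_nat_eq s (n := δ - 1) (by omega)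
    simpa [jacobianAt_sub, jacobianAt_X, jacobianAt_smul_of_isHomogeneous hhom] using hdet (t • x)
  exact ⟨hnil, fun k hk =>
    (Matrix.isNilpotent_trace_of_isNilpotent (hnil.pow_of_pos (by omega))).eq_zero⟩

/-- if each component of `H` is homogeneous of degree `δ ≥ 2` and the Jacobian
determinant of `F = I - H` is identically `1` on `ℂ^N`, then `J(H)` is nilpotent at every point,
and in fact all traces of powers `J(H)(X)^k`, `k ≥ 1`, vanish. -/
theorem homogeneous_constant_jacobian_nilpotent {N : ℕ} (hN : 1 ≤ N) (δ : ℕ) (hδ : 2 ≤ δ)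
    (H : Fin N → MvPolynomial (Fin N) ℂ)
    (hhom : ∀ i, (H i).IsHomogeneous δ)
    (hdet : ∀ X : Fin N → ℂ,
      (jacobianAt (fun i => MvPolynomial.X i - H i) X).det = 1) :
    ∀ X : Fin N → ℂ,
      IsNilpotent (jacobianAt H X) ∧
        ∀ k : ℕ, 1 ≤ k → Matrix.trace ((jacobianAt H X) ^ k) = 0 :=
  homogeneous_constant_jacobian_nilpotent_general δ hδ H hhom hdet
end

section
/- Let H : ℂ^N → ℂ^N be a polynomial mapping all of whose terms have degree at least two, with coefficients H_{i,α} (so H_i(X) = ∑_{|α|≥2}(H_{i,α}/α!)X^α), and let m ≥ 1. Then the following are equivalent: (1) J(H)(X)^m = 0 for all X ∈ ℂ^N, where J(H) is the Jacobian matrix of H; (2) for all i, j ∈ {1,…,N} and all multi-indices α ∈ ℤ_{≥0}^N, ∑_{T ∈ Fern_{i,α,j}(m)} E_H(T) = 0, where Fern_{i,α,j}(m) is the set of typed, leaf-labelled ferns of length m with root type i, spine-end type j, and non-spine leaves labelled by [α], and E_H(T) = ∏_{v internal} H_{τ(v),μ(v)}. -/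
/-!
Both sides are statements about the polynomial Jacobian `J = (∂_j H_i)_{ij}`. Since `ℂ` is
infinite, the left side says `J ^ m = 0` as a matrix of polynomials. On the right, the spine
edge `v_{l-1} → v_l` of a fern contributes
`H_{κ(l-1), e_{κ(l)} + S} = S! · coeff_S (∂_{κ(l)} H_{κ(l-1)})`, so summing over the spine
types `κ` turns the fern sum into a path expansion of `J ^ m`, provided
`∑_φ ∏_l S_l! coeff_{S_l}(p_l) = α! coeff_α (∏_l p_l)`, the sum running over all ways `φ` of
distributing the labelled leaves `[α]` over the factors. That identity follows by induction on
the leaves: removing a leaf of type `t` trades `S + e_t` for a derivative `∂_t`, and the Leibniz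
rule redistributes `∂_t` over the product. Hence the fern sum is `α! · coeff_α ((J ^ m)_{ij})`.
-/

open scoped Classical

/-- The exponential-normalization coefficients `H_{i,β} = β! · coeff_β(H_i)` of a polynomial
mapping, so that `H_i = ∑_β (H_{i,β}/β!) X^β`. -/
noncomputable def expCoeff {N : ℕ} (H : Fin N → MvPolynomial (Fin N) ℂ)
    (i : Fin N) (β : Fin N →₀ ℕ) : ℂ :=
  (β.prod fun _ n => (n.factorial : ℂ)) * MvPolynomial.coeff β (H i)

/-- The fern sum `∑_{T ∈ Fern_{i,α,j}(m)} E_H(T)`.  A typed leaf-labelled fern of length `m`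
with root type `i` and spine-end type `j` is faithfully encoded by the types
`κ 0 = i, κ 1, …, κ m = j` of its spine vertices together with the assignment
`φ : [α] → {1,…,m}` attaching each non-spine leaf (labelled by `[α] = {(t,a) : a ≤ α_t}`,
with type `t`) to its parent spine vertex.  Its energy is
`∏_{l=1}^m H_{κ(l-1), e_{κ(l)} + #S_l}` where `S_l` is the multi-index of types of the leaf
children of the `(l-1)`-st spine vertex. -/
noncomputable def fernSum {N : ℕ} (H : Fin N → MvPolynomial (Fin N) ℂ)
    (m : ℕ) (i j : Fin N) (α : Fin N →₀ ℕ) : ℂ :=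
  ∑ κ ∈ (Finset.univ : Finset (Fin (m + 1) → Fin N)).filter
      (fun κ => κ 0 = i ∧ κ (Fin.last m) = j),
    ∑ φ : (Σ t : Fin N, Fin (α t)) → Fin m,
      ∏ l : Fin m,
        expCoeff H (κ l.castSucc)
          (Finsupp.single (κ l.succ) 1 +
            Finsupp.equivFunOnFinite.symm fun t : Fin N =>
              (Finset.univ.filter
                (fun x : Σ t : Fin N, Fin (α t) => φ x = l ∧ x.1 = t)).card)

open Finset MvPolynomial

section MultiIndex

variable {σ R : Type*} [CommSemiring R]

noncomputable def multiFactorial (S : σ →₀ ℕ) : R :=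
  S.prod fun _ k => (k.factorial : R)

theorem multiFactorial_add_single (S : σ →₀ ℕ) (j : σ) :
    (multiFactorial (S + Finsupp.single j 1) : R) = (S j + 1) * multiFactorial S := by
  classical
  unfold multiFactorial
  rw [← Finsupp.mul_prod_erase' _ j _ (fun _ => by simp),
    ← Finsupp.mul_prod_erase' S j _ (fun _ => by simp), Finsupp.erase_add, Finsupp.erase_single,
    add_zero]
  simp [Nat.factorial_succ, mul_assoc]

theorem multiFactorial_ne_zero [CharZero R] (S : σ →₀ ℕ) : (multiFactorial S : R) ≠ 0 := by
  rw [multiFactorial, ← Nat.cast_finsuppProd]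
  exact Nat.cast_ne_zero.mpr (Finsupp.prod_ne_zero_iff.mpr fun _ _ => Nat.factorial_ne_zero _)

theorem multiFactorial_mul_coeff_pderiv (S : σ →₀ ℕ) (j : σ) (q : MvPolynomial σ R) :
    multiFactorial S * coeff S (pderiv j q)
      = multiFactorial (S + Finsupp.single j 1) * coeff (S + Finsupp.single j 1) q := by
  rw [coeff_pderiv, multiFactorial_add_single]
  ring

theorem pderiv_prod {μ : Type*} [DecidableEq μ] (j : σ) (s : Finset μ)
    (p : μ → MvPolynomial σ R) :
    pderiv j (∏ l ∈ s, p l) = ∑ l₀ ∈ s, ∏ l ∈ s, Function.update p l₀ (pderiv j (p l₀)) l := by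
  induction s using Finset.induction_on with
  | empty => simp
  | insert a s ha ih =>
    have hne : ∀ l ∈ s, l ≠ a := fun l hl h => ha (h ▸ hl)
    rw [prod_insert ha, pderiv_mul, ih, sum_insert ha, mul_sum, prod_insert ha,
      Function.update_self]
    congr 1
    · exact congrArg _ (prod_congr rfl fun l hl => (Function.update_of_ne (hne l hl) _ _).symm)
    · refine sum_congr rfl fun l₀ hl₀ => ?_
      rw [prod_insert ha, Function.update_of_ne (hne l₀ hl₀).symm]

noncomputable def typeCount {ι : Type*} (τ : ι → σ) (s : Finset ι) : σ →₀ ℕ :=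
  ∑ a ∈ s, Finsupp.single (τ a) 1

theorem typeCount_filter_comp_equiv {ι κ : Type*} [Fintype ι] [Fintype κ] (e : ι ≃ κ)
    (τ : κ → σ) (P : ι → Prop) [DecidablePred P] :
    typeCount τ {b | P (e.symm b)} = typeCount (τ ∘ e) {a | P a} := by
  simp only [typeCount, sum_filter, ← e.sum_comp, Function.comp_apply, Equiv.symm_apply_apply]

theorem typeCount_filter_option {ι μ : Type*} [Fintype ι] [DecidableEq μ] (τ : Option ι → σ)
    (φ : Option ι → μ) (l : μ) :
    typeCount τ {a | φ a = l} = typeCount (τ ∘ some) {a | φ (some a) = l}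
      + if φ none = l then Finsupp.single (τ none) 1 else 0 := by
  simp only [typeCount, sum_filter, Fintype.sum_option]
  rw [add_comm]
  split_ifs <;> rfl

theorem sum_prod_multiFactorial_mul_coeff {ι μ : Type*} [Fintype ι] [DecidableEq ι]
    [Fintype μ] [DecidableEq μ] (τ : ι → σ) (p : μ → MvPolynomial σ R) :
    ∑ φ : ι → μ, ∏ l, multiFactorial (typeCount τ {a | φ a = l})
        * coeff (typeCount τ {a | φ a = l}) (p l)
      = multiFactorial (typeCount τ univ) * coeff (typeCount τ univ) (∏ l, p l) := by
  revert τ p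
  refine Fintype.induction_empty_option
    (P := fun ι _ => ∀ [DecidableEq ι] (τ : ι → σ) (p : μ → MvPolynomial σ R),
      ∑ φ : ι → μ, ∏ l, multiFactorial (typeCount τ {a | φ a = l})
          * coeff (typeCount τ {a | φ a = l}) (p l)
        = multiFactorial (typeCount τ univ) * coeff (typeCount τ univ) (∏ l, p l)) ?_ ?_ ?_ ι
  · intro α β _ e ih _ τ p
    let _ := Fintype.ofEquiv β e.symm
    let _ := e.decidableEq
    have huniv : typeCount τ univ = typeCount (τ ∘ e) univ := by
      simpa using typeCount_filter_comp_equiv e τ fun _ => True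
    rw [← (e.arrowCongr (Equiv.refl μ)).sum_comp, huniv, ← ih]
    refine sum_congr rfl fun ψ _ => prod_congr rfl fun l _ => ?_
    rw [← typeCount_filter_comp_equiv e τ (ψ · = l)]
    rfl
  · intro _ τ p
    simp [typeCount, multiFactorial, ← constantCoeff_eq]
  · intro α _ ih _ τ p
    classical
    have hstep : ∀ φ : Option α → μ,
        ∏ l, multiFactorial (typeCount τ {a | φ a = l}) * coeff (typeCount τ {a | φ a = l}) (p l)
          = ∏ l, multiFactorial (typeCount (τ ∘ some) {a | φ (some a) = l})
            * coeff (typeCount (τ ∘ some) {a | φ (some a) = l})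
              (Function.update p (φ none) (pderiv (τ none) (p (φ none))) l) := by
      intro φ
      refine prod_congr rfl fun l _ => ?_
      rw [typeCount_filter_option]
      by_cases hl : φ none = l
      · subst hl
        rw [if_pos rfl, Function.update_self, multiFactorial_mul_coeff_pderiv]
      · rw [if_neg hl, add_zero, Function.update_of_ne (Ne.symm hl)]
    have htotal : typeCount τ univ = typeCount (τ ∘ some) univ + Finsupp.single (τ none) 1 := by
      simpa using typeCount_filter_option τ (fun _ => ()) ()
    rw [← (Equiv.piOptionEquivProd (β := fun _ => μ)).symm.sum_comp, Fintype.sum_prod_type]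
    simp only [hstep, Equiv.piOptionEquivProd_symm_apply]
    simp only [ih, ← mul_sum, ← coeff_sum, ← pderiv_prod, htotal,
      multiFactorial_mul_coeff_pderiv]

end MultiIndex

theorem typeCount_sigma_fst {σ : Type*} [Fintype σ] [DecidableEq σ] (α : σ →₀ ℕ) :
    typeCount (Sigma.fst : (Σ t, Fin (α t)) → σ) univ = α := by
  simp [typeCount, Fintype.sum_sigma, Finsupp.univ_sum_single]

theorem equivFunOnFinite_symm_card_filter {ι σ : Type*} [Fintype ι] [Finite σ] [DecidableEq σ]
    (τ : ι → σ) (P : ι → Prop) [DecidablePred P] :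
    Finsupp.equivFunOnFinite.symm (fun t => #{a | P a ∧ τ a = t}) = typeCount τ {a | P a} := by
  ext t
  rw [typeCount, Finsupp.finsetSum_apply]
  simp [Finsupp.single_apply, filter_filter, eq_comm]

theorem Matrix.pow_apply_eq_sum_paths {n R : Type*} [Fintype n] [DecidableEq n] [CommSemiring R]
    (M : Matrix n n R) (m : ℕ) (i j : n) :
    (M ^ m) i j = ∑ κ ∈ univ.filter (fun κ : Fin (m + 1) → n => κ 0 = i ∧ κ (Fin.last m) = j),
      ∏ l : Fin m, M (κ l.castSucc) (κ l.succ) := by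
  induction m generalizing j with
  | zero =>
    rw [sum_filter, ← (Equiv.funUnique (Fin 1) n).symm.sum_comp]
    simp [Matrix.one_apply, ite_and]
  | succ m ih =>
    rw [pow_succ, Matrix.mul_apply, sum_filter, ← (Fin.snocEquiv fun _ => n).sum_comp,
      Fintype.sum_prod_type, Finset.sum_comm]
    simp only [ih, sum_mul, sum_filter]
    rw [Finset.sum_comm]
    simp [Fin.snocEquiv, Fin.prod_univ_castSucc, ite_and, Fin.succ_castSucc, -Fin.castSucc_succ]

theorem Matrix.forall_map_eval_eq_zero_iff {m n σ R : Type*} [CommRing R] [IsDomain R]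
    [Infinite R] (P : Matrix m n (MvPolynomial σ R)) : (∀ X, P.map (eval X) = 0) ↔ P = 0 := by
  refine ⟨fun h => ?_, fun h X => by simp [h]⟩
  refine Matrix.ext fun i j => MvPolynomial.funext fun X => ?_
  simpa using congrFun (congrFun (h X) i) j

section Jacobian

variable {N : ℕ} (H : Fin N → MvPolynomial (Fin N) ℂ)

noncomputable def jacobianPoly : Matrix (Fin N) (Fin N) (MvPolynomial (Fin N) ℂ) :=
  Matrix.of fun i j => pderiv j (H i)

theorem jacobianAt_pow (X : Fin N → ℂ) (m : ℕ) :
    jacobianAt H X ^ m = (jacobianPoly H ^ m).map (eval X) :=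
  (Matrix.map_pow _ _ _).symm

theorem expCoeff_single_add (i j : Fin N) (S : Fin N →₀ ℕ) :
    expCoeff H i (Finsupp.single j 1 + S) = multiFactorial S * coeff S (pderiv j (H i)) := by
  rw [multiFactorial_mul_coeff_pderiv, add_comm]
  rfl

theorem fernSum_eq (m : ℕ) (i j : Fin N) (α : Fin N →₀ ℕ) :
    fernSum H m i j α = multiFactorial α * coeff α ((jacobianPoly H ^ m) i j) := by
  rw [Matrix.pow_apply_eq_sum_paths, coeff_sum, mul_sum, fernSum]
  refine sum_congr rfl fun κ _ => ?_
  have key := sum_prod_multiFactorial_mul_coeff (Sigma.fst : (Σ t, Fin (α t)) → Fin N)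
    fun l : Fin m => jacobianPoly H (κ l.castSucc) (κ l.succ)
  rw [typeCount_sigma_fst] at key
  rw [← key]
  simp only [equivFunOnFinite_symm_card_filter, expCoeff_single_add, jacobianPoly, Matrix.of_apply]

end Jacobian

theorem fern_lemma_general {N : ℕ} (m : ℕ)
    (H : Fin N → MvPolynomial (Fin N) ℂ) :
    (∀ X : Fin N → ℂ, (jacobianAt H X) ^ m = 0) ↔
      (∀ i j : Fin N, ∀ α : Fin N →₀ ℕ, fernSum H m i j α = 0) := by
  simp only [jacobianAt_pow, Matrix.forall_map_eval_eq_zero_iff, fernSum_eq, mul_eq_zero,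
    multiFactorial_ne_zero, false_or]
  simp [← Matrix.ext_iff, MvPolynomial.ext_iff]

/-- the fern lemma: for a polynomial mapping `H` all of whose terms have degree
at least two, `J(H)(X)^m = 0` for all `X ∈ ℂ^N` if and only if all fern sums of length `m`
vanish. -/
theorem fern_lemma {N : ℕ} (m : ℕ) (hm : 1 ≤ m)
    (H : Fin N → MvPolynomial (Fin N) ℂ)
    (hH : ∀ i (β : Fin N →₀ ℕ), (β.sum fun _ n => n) < 2 → MvPolynomial.coeff β (H i) = 0) :
    (∀ X : Fin N → ℂ, (jacobianAt H X) ^ m = 0) ↔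
      (∀ i j : Fin N, ∀ α : Fin N →₀ ℕ, fernSum H m i j α = 0) :=
  fern_lemma_general m H
end
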